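/- arXiv:1702.05179 — 3 statements merged into one kernel-verified Lean document; each statement's English description precedes it below -/
import Mathlib

section
/- Let C ⊂ 𝕋 be a static curve of length L (in particular, C is not a straight line segment). Then for every probability measure μ on S¹ invariant under rotation by π/2, one has L²/16 ≤ A_C(μ) ≤ L²/4, and moreover the strict inequality 16·A_C(μ) − L² > 0 holds. -/
open MeasureTheory ProbabilityTheory Real Filter Topology
open scoped ENNReal

noncomputable section

/-- The set `S` of natural numbers expressible as a sum of two squares. -/
def sumTwoSquares : Set ℕ := {m : ℕ | ∃ a b : ℤ, (m : ℤ) = a ^ 2 + b ^ 2}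

/-- `Λ n` : the set of lattice points lying on the circle of radius `√n`. -/
def latticePoints (n : ℕ) : Finset (ℤ × ℤ) :=
  (Finset.Icc (-(n : ℤ), -(n : ℤ)) ((n : ℤ), (n : ℤ))).filter
    fun l => l.1 ^ 2 + l.2 ^ 2 = (n : ℤ)

/-- `N n = |Λ n|`, the number of lattice points on the circle of radius `√n`. -/
def latCard (n : ℕ) : ℕ := (latticePoints n).card

/-- The Euclidean norm of an integer vector. -/
def inorm (l : ℤ × ℤ) : ℝ := Real.sqrt ((l.1 : ℝ) ^ 2 + (l.2 : ℝ) ^ 2)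

/-- The Euclidean inner product on `ℝ²`. -/
def dot (v w : ℝ × ℝ) : ℝ := v.1 * w.1 + v.2 * w.2

/-- The unit vector `λ/|λ|`. -/
def dir (l : ℤ × ℤ) : ℝ × ℝ := ((l.1 : ℝ) / inorm l, (l.2 : ℝ) / inorm l)

/-- A sequence of energies `n : ℕ → ℕ` is `δ`-separated if
`min_{λ ≠ λ' ∈ Λ_n} ‖λ - λ'‖ ≫ n^(1/4+δ)`. -/
def IsDeltaSep (δ : ℝ) (n : ℕ → ℕ) : Prop :=
  ∃ c > 0, ∀ k, ∀ l ∈ latticePoints (n k), ∀ l' ∈ latticePoints (n k), l ≠ l' →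
    c * (n k : ℝ) ^ ((1 : ℝ) / 4 + δ) ≤ inorm (l - l')

/-- `B_C(μ_n)`, expressed through the lattice points. -/
def Bseq (γ : ℝ → ℝ × ℝ) (L : ℝ) (n : ℕ) : ℝ :=
  ∫ t1 in Set.Icc (0 : ℝ) L, ∫ t2 in Set.Icc (0 : ℝ) L,
    (latCard n : ℝ)⁻¹ * ∑ l ∈ latticePoints n,
      dot (dir l) (deriv γ t1) ^ 2 * dot (dir l) (deriv γ t2) ^ 2

/-- `A_C(μ_n)`, expressed through the lattice points. -/
def Aseq (γ : ℝ → ℝ × ℝ) (L : ℝ) (n : ℕ) : ℝ :=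
  ((latCard n : ℝ)⁻¹) ^ 2 * ∑ l ∈ latticePoints n, ∑ l' ∈ latticePoints n,
    (∫ t in Set.Icc (0 : ℝ) L,
      dot (dir l) (deriv γ t) ^ 2 * dot (dir l') (deriv γ t) ^ 2) ^ 2

/-- `F_C(μ_n)`, expressed through the lattice points. -/
def Fseq (γ : ℝ → ℝ × ℝ) (L : ℝ) (n : ℕ) : ℝ :=
  ∫ t1 in Set.Icc (0 : ℝ) L, ∫ t2 in Set.Icc (0 : ℝ) L,
    ((latCard n : ℝ) ^ 2)⁻¹ * ∑ l ∈ latticePoints n, ∑ l' ∈ latticePoints n,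
      dot (dir l) (deriv γ t1) * dot (dir l) (deriv γ t2) *
        (dot (dir l') (deriv γ t1) * dot (dir l') (deriv γ t2))

/-- `B_C(μ)` for a probability measure `μ` on (the unit circle in) `ℝ²`. -/
def Bmeas (γ : ℝ → ℝ × ℝ) (L : ℝ) (μ : Measure (ℝ × ℝ)) : ℝ :=
  ∫ t1 in Set.Icc (0 : ℝ) L, ∫ t2 in Set.Icc (0 : ℝ) L,
    ∫ θ, dot θ (deriv γ t1) ^ 2 * dot θ (deriv γ t2) ^ 2 ∂μ

/-- `A_C(μ)` for a probability measure `μ` on (the unit circle in) `ℝ²`. -/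
def Ameas (γ : ℝ → ℝ × ℝ) (L : ℝ) (μ : Measure (ℝ × ℝ)) : ℝ :=
  ∫ θ, ∫ θ', (∫ t in Set.Icc (0 : ℝ) L,
    dot θ (deriv γ t) ^ 2 * dot θ' (deriv γ t) ^ 2) ^ 2 ∂μ ∂μ

/-- A measure on `ℝ²` which is a probability measure supported on the unit circle `S¹`. -/
def IsCircleProb (μ : Measure (ℝ × ℝ)) : Prop :=
  IsProbabilityMeasure μ ∧ (∀ᵐ θ ∂μ, θ.1 ^ 2 + θ.2 ^ 2 = 1)

/-- A curve is static if `4 B_C(μ) - L² = 0` for every probability measure `μ` on `S¹`. -/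
def IsStatic (γ : ℝ → ℝ × ℝ) (L : ℝ) : Prop :=
  ∀ μ : Measure (ℝ × ℝ), IsCircleProb μ → 4 * Bmeas γ L μ - L ^ 2 = 0

/-- The coefficients `a_λ` are i.i.d. standard complex Gaussians, save for the
relations `a_{-λ} = conj (a_λ)` (independence holds for the family indexed by a
half-plane of indices). -/
def stdModel {Ω : Type*} [MeasurableSpace Ω] (P : Measure Ω) (a : ℤ × ℤ → Ω → ℂ) : Prop :=
  (∀ l, Measurable (a l)) ∧
  (∀ l ω, a (-l) ω = (starRingEnd ℂ) (a l ω)) ∧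
  (∀ l : ℤ × ℤ, l ≠ 0 →
    Measure.map (fun ω => (a l ω).re) P = gaussianReal 0 (1 / 2) ∧
    Measure.map (fun ω => (a l ω).im) P = gaussianReal 0 (1 / 2) ∧
    IndepFun (fun ω => (a l ω).re) (fun ω => (a l ω).im) P) ∧
  iIndepFun
    (fun l : {l : ℤ × ℤ // 0 < l.2 ∨ (l.2 = 0 ∧ 0 < l.1)} => a l.1) P

/-- The arithmetic random wave `T_n` (as a `ℤ²`-periodic function on `ℝ²`). -/
def wave {Ω : Type*} (a : ℤ × ℤ → Ω → ℂ) (n : ℕ) (ω : Ω) (x : ℝ × ℝ) : ℝ :=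
  (Real.sqrt (latCard n))⁻¹ *
    (∑ l ∈ latticePoints n, a l ω *
      Complex.exp (2 * (π : ℂ) * Complex.I *
        (((l.1 : ℝ) * x.1 + (l.2 : ℝ) * x.2 : ℝ) : ℂ))).re

/-- The restricted process `f_n = T_n ∘ γ`. -/
def proc {Ω : Type*} (a : ℤ × ℤ → Ω → ℂ) (γ : ℝ → ℝ × ℝ) (n : ℕ) (ω : Ω) (t : ℝ) : ℝ :=
  wave a n ω (γ t)

/-- The nodal intersections number `Z_n`: the number of zeros of `f_n` on `[0, L]`. -/
def nodZ {Ω : Type*} (a : ℤ × ℤ → Ω → ℂ) (γ : ℝ → ℝ × ℝ) (L : ℝ) (n : ℕ) (ω : Ω) : ℝ :=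
  ({t : ℝ | t ∈ Set.Icc 0 L ∧ proc a γ n ω t = 0}).ncard

/-- `E[Z_n]`. -/
def meanZ {Ω : Type*} [MeasurableSpace Ω] (P : Measure Ω) (a : ℤ × ℤ → Ω → ℂ)
    (γ : ℝ → ℝ × ℝ) (L : ℝ) (n : ℕ) : ℝ :=
  ∫ ω, nodZ a γ L n ω ∂P

/-- Second Hermite polynomial. -/
def H2 (x : ℝ) : ℝ := x ^ 2 - 1

/-- Fourth Hermite polynomial. -/
def H4 (x : ℝ) : ℝ := x ^ 4 - 6 * x ^ 2 + 3

/-- The normalized derivative `f̃_n' = f_n' / √(2π²n)`. -/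
def procTil {Ω : Type*} (a : ℤ × ℤ → Ω → ℂ) (γ : ℝ → ℝ × ℝ) (n : ℕ) (ω : Ω) (t : ℝ) : ℝ :=
  deriv (proc a γ n ω) t / Real.sqrt (2 * π ^ 2 * n)

/-- The second chaotic projection `Z_n[2]`. -/
def chaos2 {Ω : Type*} (a : ℤ × ℤ → Ω → ℂ) (γ : ℝ → ℝ × ℝ) (L : ℝ) (n : ℕ) (ω : Ω) : ℝ :=
  (Real.sqrt (2 * π ^ 2 * n) / (2 * π)) *
    (-(∫ t in Set.Icc (0 : ℝ) L, H2 (proc a γ n ω t)) +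
      ∫ t in Set.Icc (0 : ℝ) L, H2 (procTil a γ n ω t))

/-- The fourth chaotic projection `Z_n[4]`. -/
def chaos4 {Ω : Type*} (a : ℤ × ℤ → Ω → ℂ) (γ : ℝ → ℝ × ℝ) (L : ℝ) (n : ℕ) (ω : Ω) : ℝ :=
  (Real.sqrt (2 * π ^ 2 * n) / π) *
    ((3 / 24) * ∫ t in Set.Icc (0 : ℝ) L, H4 (proc a γ n ω t)
      - (1 / 4) * ∫ t in Set.Icc (0 : ℝ) L, H2 (proc a γ n ω t) * H2 (procTil a γ n ω t)
      - (1 / 24) * ∫ t in Set.Icc (0 : ℝ) L, H4 (procTil a γ n ω t))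

/-- Convergence in distribution of real random variables, tested against bounded
continuous functions. -/
def TendstoInDistrib {Ω : Type*} [MeasurableSpace Ω] (P : Measure Ω)
    (X : ℕ → Ω → ℝ) (ν : Measure ℝ) : Prop :=
  ∀ g : BoundedContinuousFunction ℝ ℝ,
    Tendsto (fun k => ∫ ω, g (X k ω) ∂P) atTop (𝓝 (∫ x, g x ∂ν))

/-- The covariance function `r_n(t₁,t₂)` of the restricted process. -/
def covr (γ : ℝ → ℝ × ℝ) (n : ℕ) (t1 t2 : ℝ) : ℝ :=
  (latCard n : ℝ)⁻¹ * ∑ l ∈ latticePoints n,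
    Real.cos (2 * π * ((l.1 : ℝ) * ((γ t1).1 - (γ t2).1) + (l.2 : ℝ) * ((γ t1).2 - (γ t2).2)))

/-- `r₁ = ∂r/∂t₁`. -/
def covr1 (γ : ℝ → ℝ × ℝ) (n : ℕ) (t1 t2 : ℝ) : ℝ :=
  deriv (fun s => covr γ n s t2) t1

/-- `r₂ = ∂r/∂t₂`. -/
def covr2 (γ : ℝ → ℝ × ℝ) (n : ℕ) (t1 t2 : ℝ) : ℝ :=
  deriv (fun s => covr γ n t1 s) t2

/-- `r₁₂ = ∂²r/∂t₁∂t₂`. -/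
def covr12 (γ : ℝ → ℝ × ℝ) (n : ℕ) (t1 t2 : ℝ) : ℝ :=
  deriv (fun s => covr1 γ n t1 s) t2

/-- `f(t) = γ̇₁(t)² − L⁻¹∫₀^L γ̇₁(u)² du`. -/
def fGam (γ : ℝ → ℝ × ℝ) (L t : ℝ) : ℝ :=
  (deriv γ t).1 ^ 2 - L⁻¹ * ∫ u in Set.Icc (0 : ℝ) L, (deriv γ u).1 ^ 2

/-- `g(t) = γ̇₁(t)γ̇₂(t) − L⁻¹∫₀^L γ̇₁(u)γ̇₂(u) du`. -/
def gGam (γ : ℝ → ℝ × ℝ) (L t : ℝ) : ℝ :=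
  (deriv γ t).1 * (deriv γ t).2 -
    L⁻¹ * ∫ u in Set.Icc (0 : ℝ) L, (deriv γ u).1 * (deriv γ u).2

/-- `a₁(μ)`, where `m4 = μ̂(4)`. -/
def a1c (γ : ℝ → ℝ × ℝ) (L m4 : ℝ) : ℝ :=
  2 * (1 + m4) * ∫ t in Set.Icc (0 : ℝ) L, fGam γ L t ^ 2

/-- `a₂(μ)`, where `m4 = μ̂(4)`. -/
def a2c (γ : ℝ → ℝ × ℝ) (L m4 : ℝ) : ℝ :=
  2 * (1 - m4) * ∫ t in Set.Icc (0 : ℝ) L, fGam γ L t ^ 2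

/-- `a₃(μ)`, where `m4 = μ̂(4)`. -/
def a3c (γ : ℝ → ℝ × ℝ) (L m4 : ℝ) : ℝ :=
  4 * Real.sqrt (1 - m4 ^ 2) * ∫ t in Set.Icc (0 : ℝ) L, fGam γ L t * gGam γ L t

/-- The law of the random variable
`M(μ) = (16 A_C(μ) − L²)^{-1/2} (a₁(μ)(Z₁²−1) + a₂(μ)(Z₂²−1) + a₃(μ) Z₁Z₂)`
with `Z₁, Z₂` i.i.d. standard Gaussians; here `Aval = A_C(μ)` and `m4 = μ̂(4)`. -/
def lawM (γ : ℝ → ℝ × ℝ) (L Aval m4 : ℝ) : Measure ℝ :=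
  Measure.map (fun z : ℝ × ℝ =>
      (Real.sqrt (16 * Aval - L ^ 2))⁻¹ *
        (a1c γ L m4 * (z.1 ^ 2 - 1) + a2c γ L m4 * (z.2 ^ 2 - 1) + a3c γ L m4 * z.1 * z.2))
    ((gaussianReal 0 1).prod (gaussianReal 0 1))

/-- The fourth Fourier coefficient `μ̂_n(4) = ∫ z^{-4} dμ_n` of the angular measure `μ_n`. -/
def hat4seq (n : ℕ) : ℝ :=
  ((latCard n : ℂ)⁻¹ * ∑ l ∈ latticePoints n,
    ((((l.1 : ℝ) : ℂ) + ((l.2 : ℝ) : ℂ) * Complex.I) / (Real.sqrt n : ℂ)) ^ (-4 : ℤ)).re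

/-- The angular probability measure `μ_n` on the unit circle `S¹ ⊂ ℝ²`. -/
def muMeas (n : ℕ) : Measure (ℝ × ℝ) :=
  (latCard n : ℝ≥0∞)⁻¹ • ∑ l ∈ latticePoints n,
    Measure.dirac (((l.1 : ℝ) / Real.sqrt n, (l.2 : ℝ) / Real.sqrt n) : ℝ × ℝ)

/-- The fourth Fourier coefficient `μ̂(4) = ∫ z^{-4} dμ` of a measure `μ` on `S¹`. -/
def hat4meas (μ : Measure (ℝ × ℝ)) : ℝ :=
  (∫ θ, ((θ.1 : ℂ) + (θ.2 : ℂ) * Complex.I) ^ (-4 : ℤ) ∂μ).re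

/-- The integrand appearing in the approximate Kac–Rice formula. -/
def krIntegrand (r r1 r2 r12 α : ℝ) : ℝ :=
  3 / 4 * r ^ 4 + 1 / 12 * (r12 / α) ^ 4
    - 1 / 4 * (r2 / Real.sqrt α) ^ 4 - 1 / 4 * (r1 / Real.sqrt α) ^ 4
    + 2 * (r12 / α) * r * (r1 / Real.sqrt α) * (r2 / Real.sqrt α)
    + 1 / 2 * (r1 / Real.sqrt α) ^ 2 * (r2 / Real.sqrt α) ^ 2
    - 3 / 2 * r ^ 2 * (r2 / Real.sqrt α) ^ 2 - 3 / 2 * r ^ 2 * (r1 / Real.sqrt α) ^ 2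
    + 1 / 2 * (r12 / α) ^ 2 * r ^ 2
    + 1 / 2 * (r2 / Real.sqrt α) ^ 2 * (r12 / α) ^ 2
    + 1 / 2 * (r1 / Real.sqrt α) ^ 2 * (r12 / α) ^ 2

/-- Rotation of the plane by angle `θ`. -/
def rot (θ : ℝ) (v : ℝ × ℝ) : ℝ × ℝ :=
  (Real.cos θ * v.1 - Real.sin θ * v.2, Real.sin θ * v.1 + Real.cos θ * v.2)


section AmeasAux

open Set

/-- If a continuous nonnegative function has zero integral on `[0,L]`, it vanishes there. -/
lemma aux_zero_of_integral {L : ℝ} (hL : 0 < L) {f : ℝ → ℝ} (hf : Continuous f)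
    (hnn : ∀ t, 0 ≤ f t) (hz : ∫ t in Icc (0:ℝ) L, f t = 0) :
    ∀ t ∈ Icc (0:ℝ) L, f t = 0 := by
  intro t0 ht0
  by_contra hne
  have hpos : 0 < f t0 := lt_of_le_of_ne (hnn t0) (Ne.symm hne)
  have hint : Integrable f (volume.restrict (Icc (0:ℝ) L)) := hf.integrableOn_Icc
  have h0le : 0 ≤ᶠ[ae (volume.restrict (Icc (0:ℝ) L))] f := Filter.Eventually.of_forall hnn
  have hiff := integral_pos_iff_support_of_nonneg_ae h0le hint
  have hU : IsOpen {x : ℝ | f t0 / 2 < f x} := isOpen_lt continuous_const hf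
  have ht0U : t0 ∈ {x : ℝ | f t0 / 2 < f x} := by
    simp only [Set.mem_setOf_eq]; linarith
  obtain ⟨ε, hε, hball⟩ := Metric.isOpen_iff.mp hU t0 ht0U
  have ht00 : 0 ≤ t0 := ht0.1
  have ht0L : t0 ≤ L := ht0.2
  set m := max 0 (t0 - ε) with hm
  set M := min L (t0 + ε) with hM
  have hmM : m < M := by
    rw [hm, hM]
    apply max_lt
    · exact lt_min hL (by linarith)
    · exact lt_min (by linarith) (by linarith)
  have hsub : Ioo m M ⊆ Function.support f := by
    intro x hx
    have hx1 : t0 - ε < x := lt_of_le_of_lt (le_max_right _ _) hx.1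
    have hx2 : x < t0 + ε := lt_of_lt_of_le hx.2 (min_le_right _ _)
    have hxU : x ∈ {x : ℝ | f t0 / 2 < f x} := hball (by
      rw [Real.ball_eq_Ioo]; exact ⟨hx1, hx2⟩)
    have : 0 < f x := lt_trans (by linarith) hxU
    exact Function.mem_support.mpr (ne_of_gt this)
  have hmeas : 0 < (volume.restrict (Icc (0:ℝ) L)) (Function.support f) := by
    have h1 : (volume.restrict (Icc (0:ℝ) L)) (Ioo m M) = volume (Ioo m M ∩ Icc 0 L) :=
      Measure.restrict_apply measurableSet_Ioo
    have h2 : Ioo m M ∩ Icc (0:ℝ) L = Ioo m M := by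
      refine Set.inter_eq_left.mpr (fun x hx => ?_)
      constructor
      · exact le_of_lt (lt_of_le_of_lt (le_max_left 0 (t0 - ε)) hx.1)
      · exact le_of_lt (lt_of_lt_of_le hx.2 (min_le_left L (t0 + ε)))
    calc (0:ℝ≥0∞) < volume (Ioo m M) := by
            rw [Real.volume_Ioo]; exact ENNReal.ofReal_pos.mpr (by linarith)
      _ = (volume.restrict (Icc (0:ℝ) L)) (Ioo m M) := by rw [h1, h2]
      _ ≤ _ := measure_mono hsub
  have hcontra := hiff.mpr hmeas
  rw [hz] at hcontra
  exact lt_irrefl 0 hcontra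

/-- A continuous function with constant nonzero absolute value on `[0,L]` cannot have
zero integral. -/
lemma aux_no_const {L : ℝ} (hL : 0 < L) {h : ℝ → ℝ} (hc : Continuous h) {c : ℝ}
    (hcpos : 0 < c) (habs : ∀ t ∈ Icc (0:ℝ) L, h t ^ 2 = c ^ 2)
    (hint : ∫ t in Icc (0:ℝ) L, h t = 0) : False := by
  have h0m : (0:ℝ) ∈ Icc (0:ℝ) L := ⟨le_refl _, hL.le⟩
  have hval : ∀ t ∈ Icc (0:ℝ) L, h t = c ∨ h t = -c := by
    intro t ht
    have h2 := habs t ht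
    have h3 : (h t - c) * (h t + c) = 0 := by linear_combination h2
    rcases mul_eq_zero.mp h3 with h' | h'
    · left; linarith
    · right; linarith
  have hconst : ∀ t ∈ Icc (0:ℝ) L, h t = h 0 := by
    intro t ht
    by_contra hne
    have hsubI : uIcc (0:ℝ) t ⊆ Icc 0 L := by
      rw [uIcc_of_le ht.1]
      exact Icc_subset_Icc le_rfl ht.2
    have h0mem : (0:ℝ) ∈ uIcc (h 0) (h t) := by
      rcases hval 0 h0m with h0 | h0 <;> rcases hval t ht with h1 | h1
      · exact absurd (h1.trans h0.symm) (by exact fun hh => hne hh)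
      · rw [h0, h1, Set.mem_uIcc]; right; constructor <;> linarith
      · rw [h0, h1, Set.mem_uIcc]; left; constructor <;> linarith
      · exact absurd (h1.trans h0.symm) (by exact fun hh => hne hh)
    obtain ⟨sp, hsp, hsp0⟩ := intermediate_value_uIcc (hc.continuousOn) h0mem
    have h5 := habs sp (hsubI hsp)
    rw [hsp0] at h5
    nlinarith
  have hIeq : ∫ t in Icc (0:ℝ) L, h t = h 0 * L := by
    rw [setIntegral_congr_fun measurableSet_Icc (fun t ht => hconst t ht)]
    rw [setIntegral_const, measureReal_def, Real.volume_Icc]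
    rw [ENNReal.toReal_ofReal (by linarith)]
    rw [smul_eq_mul]; ring
  rw [hint] at hIeq
  rcases hval 0 h0m with h' | h' <;> rw [h'] at hIeq <;> nlinarith

/-- Linearity of the integral for a 5-term combination. -/
lemma aux_int5 {α : Type*} {m : MeasurableSpace α} {μ : Measure α} {f1 f2 f3 f4 f5 : α → ℝ}
    (h1 : Integrable f1 μ) (h2 : Integrable f2 μ) (h3 : Integrable f3 μ)
    (h4 : Integrable f4 μ) (h5 : Integrable f5 μ) (c1 c2 c3 c4 c5 : ℝ) :
    ∫ x, (c1 * f1 x + c2 * f2 x + c3 * f3 x + c4 * f4 x + c5 * f5 x) ∂μ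
      = c1 * ∫ x, f1 x ∂μ + c2 * ∫ x, f2 x ∂μ + c3 * ∫ x, f3 x ∂μ
        + c4 * ∫ x, f4 x ∂μ + c5 * ∫ x, f5 x ∂μ := by
  have i1 : Integrable (fun x => c1 * f1 x) μ := h1.const_mul c1
  have i2 : Integrable (fun x => c2 * f2 x) μ := h2.const_mul c2
  have i3 : Integrable (fun x => c3 * f3 x) μ := h3.const_mul c3
  have i4 : Integrable (fun x => c4 * f4 x) μ := h4.const_mul c4
  have i5 : Integrable (fun x => c5 * f5 x) μ := h5.const_mul c5
  have i12 : Integrable (fun x => c1 * f1 x + c2 * f2 x) μ := i1.add i2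
  have i123 : Integrable (fun x => c1 * f1 x + c2 * f2 x + c3 * f3 x) μ := i12.add i3
  have i1234 : Integrable (fun x => c1 * f1 x + c2 * f2 x + c3 * f3 x + c4 * f4 x) μ :=
    i123.add i4
  rw [integral_add i1234 i5, integral_add i123 i4, integral_add i12 i3, integral_add i1 i2,
      integral_const_mul, integral_const_mul, integral_const_mul, integral_const_mul,
      integral_const_mul]

/-- Integrating a 5-term affine combination against a probability measure. -/
lemma aux_int6 {α : Type*} {m : MeasurableSpace α} {μ : Measure α} [IsProbabilityMeasure μ]
    {f1 f2 f3 f4 f5 : α → ℝ}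
    (h1 : Integrable f1 μ) (h2 : Integrable f2 μ) (h3 : Integrable f3 μ)
    (h4 : Integrable f4 μ) (h5 : Integrable f5 μ) (c0 c1 c2 c3 c4 c5 : ℝ) :
    ∫ x, (c0 + (c1 * f1 x + c2 * f2 x + c3 * f3 x + c4 * f4 x + c5 * f5 x)) ∂μ
      = c0 + (c1 * ∫ x, f1 x ∂μ + c2 * ∫ x, f2 x ∂μ + c3 * ∫ x, f3 x ∂μ
        + c4 * ∫ x, f4 x ∂μ + c5 * ∫ x, f5 x ∂μ) := by
  have i0 : Integrable (fun _ : α => c0) μ := integrable_const c0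
  have isum : Integrable
      (fun x => c1 * f1 x + c2 * f2 x + c3 * f3 x + c4 * f4 x + c5 * f5 x) μ :=
    ((((h1.const_mul c1).add (h2.const_mul c2)).add (h3.const_mul c3)).add
      (h4.const_mul c4)).add (h5.const_mul c5)
  rw [integral_add i0 isum, aux_int5 h1 h2 h3 h4 h5, integral_const]
  simp [measure_univ]

/-- Integrating a 5-term affine combination over `[0,L]`. -/
lemma aux_int6_Icc {L : ℝ} (hL : 0 ≤ L) {f1 f2 f3 f4 f5 : ℝ → ℝ}
    (h1 : Continuous f1) (h2 : Continuous f2) (h3 : Continuous f3)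
    (h4 : Continuous f4) (h5 : Continuous f5) (c0 c1 c2 c3 c4 c5 : ℝ) :
    ∫ t in Icc (0:ℝ) L, (c0 + (c1 * f1 t + c2 * f2 t + c3 * f3 t + c4 * f4 t + c5 * f5 t))
      = c0 * L + (c1 * (∫ t in Icc (0:ℝ) L, f1 t) + c2 * (∫ t in Icc (0:ℝ) L, f2 t)
        + c3 * (∫ t in Icc (0:ℝ) L, f3 t) + c4 * (∫ t in Icc (0:ℝ) L, f4 t)
        + c5 * (∫ t in Icc (0:ℝ) L, f5 t)) := by
  have i0 : Integrable (fun _ : ℝ => c0) (volume.restrict (Icc (0:ℝ) L)) :=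
    integrable_const c0
  have isum : Integrable
      (fun x => c1 * f1 x + c2 * f2 x + c3 * f3 x + c4 * f4 x + c5 * f5 x)
      (volume.restrict (Icc (0:ℝ) L)) :=
    ((((h1.integrableOn_Icc.const_mul c1).add (h2.integrableOn_Icc.const_mul c2)).add
      (h3.integrableOn_Icc.const_mul c3)).add (h4.integrableOn_Icc.const_mul c4)).add
      (h5.integrableOn_Icc.const_mul c5)
  rw [integral_add i0 isum, aux_int5 h1.integrableOn_Icc h2.integrableOn_Icc
      h3.integrableOn_Icc h4.integrableOn_Icc h5.integrableOn_Icc,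
      setIntegral_const, measureReal_def, Real.volume_Icc, ENNReal.toReal_ofReal (by linarith : (0:ℝ) ≤ L - 0),
      smul_eq_mul]
  ring

end AmeasAux

def pC (γ : ℝ → ℝ × ℝ) (t : ℝ) : ℝ := (deriv γ t).1 ^ 2 - (deriv γ t).2 ^ 2
def qC (γ : ℝ → ℝ × ℝ) (t : ℝ) : ℝ := 2 * ((deriv γ t).1 * (deriv γ t).2)
def aCo (γ : ℝ → ℝ × ℝ) (L : ℝ) : ℝ := ∫ t in Set.Icc (0:ℝ) L, pC γ t ^ 2
def bCo (γ : ℝ → ℝ × ℝ) (L : ℝ) : ℝ := ∫ t in Set.Icc (0:ℝ) L, qC γ t ^ 2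
def eCo (γ : ℝ → ℝ × ℝ) (L : ℝ) : ℝ := ∫ t in Set.Icc (0:ℝ) L, pC γ t * qC γ t

section AmeasMain

open Set

set_option maxHeartbeats 2000000 in
lemma aux_main (γ : ℝ → ℝ × ℝ) (L : ℝ) (hL : 0 < L)
    (hd : Continuous (deriv γ))
    (hunit : ∀ t, (deriv γ t).1 ^ 2 + (deriv γ t).2 ^ 2 = 1)
    (hstatic : IsStatic γ L)
    (μ : Measure (ℝ × ℝ)) (hμ : IsCircleProb μ) :
    L ^ 2 / 16 ≤ Ameas γ L μ ∧ Ameas γ L μ ≤ L ^ 2 / 4 ∧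
      0 < 16 * Ameas γ L μ - L ^ 2 := by
  obtain ⟨hprob, hae⟩ := hμ
  haveI : IsProbabilityMeasure μ := hprob
  have hu : Continuous fun t => (deriv γ t).1 := hd.fst
  have hv : Continuous fun t => (deriv γ t).2 := hd.snd
  have hdotc : ∀ θ : ℝ × ℝ, Continuous fun t => dot θ (deriv γ t) ^ 2 := by
    intro θ
    simp only [dot]
    exact ((continuous_const.mul hu).add (continuous_const.mul hv)).pow 2
  -- Step 1: the static hypothesis at Dirac measures
  have hstat2 : ∀ θ : ℝ × ℝ, θ.1 ^ 2 + θ.2 ^ 2 = 1 →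
      ∫ t in Icc (0:ℝ) L, dot θ (deriv γ t) ^ 2 = L / 2 := by
    intro θ hθ
    have hms : MeasurableSet {x : ℝ × ℝ | x.1 ^ 2 + x.2 ^ 2 = 1} := by
      have hc : Continuous fun x : ℝ × ℝ => x.1 ^ 2 + x.2 ^ 2 :=
        (continuous_fst.pow 2).add (continuous_snd.pow 2)
      exact hc.measurable (measurableSet_singleton 1)
    have hcirc : IsCircleProb (Measure.dirac θ) :=
      ⟨by infer_instance, (MeasureTheory.ae_dirac_iff hms).mpr hθ⟩
    have hb := hstatic (Measure.dirac θ) hcirc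
    have hBm : Bmeas γ L (Measure.dirac θ)
        = (∫ t in Icc (0:ℝ) L, dot θ (deriv γ t) ^ 2) ^ 2 := by
      unfold Bmeas
      simp only [MeasureTheory.integral_dirac]
      calc ∫ t1 in Icc (0:ℝ) L, ∫ t2 in Icc (0:ℝ) L,
              dot θ (deriv γ t1) ^ 2 * dot θ (deriv γ t2) ^ 2
          = ∫ t1 in Icc (0:ℝ) L, dot θ (deriv γ t1) ^ 2
              * ∫ t2 in Icc (0:ℝ) L, dot θ (deriv γ t2) ^ 2 := by
            refine setIntegral_congr_fun measurableSet_Icc (fun t1 _ => ?_)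
            exact integral_const_mul _ _
        _ = (∫ t1 in Icc (0:ℝ) L, dot θ (deriv γ t1) ^ 2)
              * ∫ t2 in Icc (0:ℝ) L, dot θ (deriv γ t2) ^ 2 := integral_mul_const _ _
        _ = (∫ t in Icc (0:ℝ) L, dot θ (deriv γ t) ^ 2) ^ 2 := by ring
    rw [hBm] at hb
    have hgnn : 0 ≤ ∫ t in Icc (0:ℝ) L, dot θ (deriv γ t) ^ 2 :=
      setIntegral_nonneg measurableSet_Icc (fun t _ => sq_nonneg _)
    have hfact : (2 * (∫ t in Icc (0:ℝ) L, dot θ (deriv γ t) ^ 2) - L)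
        * (2 * (∫ t in Icc (0:ℝ) L, dot θ (deriv γ t) ^ 2) + L) = 0 := by
      linear_combination hb
    rcases mul_eq_zero.mp hfact with h' | h'
    · linarith
    · linarith
  -- Step 2: moments of the tangent components
  have hcu2 : Continuous fun t => (deriv γ t).1 ^ 2 := hu.pow 2
  have hcv2 : Continuous fun t => (deriv γ t).2 ^ 2 := hv.pow 2
  have hcuv : Continuous fun t => (deriv γ t).1 * (deriv γ t).2 := hu.mul hv
  have hint_u2 : ∫ t in Icc (0:ℝ) L, (deriv γ t).1 ^ 2 = L / 2 := by
    have h := hstat2 (1, 0) (by norm_num)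
    simpa [dot] using h
  have hint_v2 : ∫ t in Icc (0:ℝ) L, (deriv γ t).2 ^ 2 = L / 2 := by
    have h := hstat2 (0, 1) (by norm_num)
    simpa [dot] using h
  have hint_uv : ∫ t in Icc (0:ℝ) L, (deriv γ t).1 * (deriv γ t).2 = 0 := by
    have hc2 : (Real.sqrt 2⁻¹ : ℝ) ^ 2 = 2⁻¹ := Real.sq_sqrt (by norm_num)
    have hθ : ((Real.sqrt 2⁻¹ : ℝ), (Real.sqrt 2⁻¹ : ℝ)).1 ^ 2
        + ((Real.sqrt 2⁻¹ : ℝ), (Real.sqrt 2⁻¹ : ℝ)).2 ^ 2 = 1 := by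
      show (Real.sqrt 2⁻¹ : ℝ) ^ 2 + (Real.sqrt 2⁻¹ : ℝ) ^ 2 = 1
      rw [hc2]; norm_num
    have h2 := hstat2 _ hθ
    have hrw : ∀ t : ℝ, dot (Real.sqrt 2⁻¹, Real.sqrt 2⁻¹) (deriv γ t) ^ 2
        = 2⁻¹ * (deriv γ t).1 ^ 2 + 2⁻¹ * (deriv γ t).2 ^ 2
          + (deriv γ t).1 * (deriv γ t).2 := by
      intro t
      simp only [dot]
      linear_combination ((deriv γ t).1 ^ 2 + (deriv γ t).2 ^ 2
        + 2 * ((deriv γ t).1 * (deriv γ t).2)) * hc2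
    rw [setIntegral_congr_fun measurableSet_Icc (fun t _ => hrw t)] at h2
    have iA : Integrable (fun t => 2⁻¹ * (deriv γ t).1 ^ 2)
        (volume.restrict (Icc (0:ℝ) L)) := hcu2.integrableOn_Icc.const_mul _
    have iB : Integrable (fun t => 2⁻¹ * (deriv γ t).2 ^ 2)
        (volume.restrict (Icc (0:ℝ) L)) := hcv2.integrableOn_Icc.const_mul _
    have iAB : Integrable (fun t => 2⁻¹ * (deriv γ t).1 ^ 2 + 2⁻¹ * (deriv γ t).2 ^ 2)
        (volume.restrict (Icc (0:ℝ) L)) := iA.add iB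
    rw [integral_add iAB hcuv.integrableOn_Icc, integral_add iA iB,
        integral_const_mul, integral_const_mul, hint_u2, hint_v2] at h2
    linarith
  -- p, q and their moments
  have hpc : Continuous (pC γ) := by
    unfold pC; exact hcu2.sub hcv2
  have hqc : Continuous (qC γ) := by
    unfold qC; exact continuous_const.mul hcuv
  have hint_p : ∫ t in Icc (0:ℝ) L, pC γ t = 0 := by
    unfold pC
    rw [integral_sub hcu2.integrableOn_Icc hcv2.integrableOn_Icc, hint_u2, hint_v2]
    ring
  have hint_q : ∫ t in Icc (0:ℝ) L, qC γ t = 0 := by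
    unfold qC
    rw [integral_const_mul, hint_uv]
    ring
  have hpq1 : ∀ t, pC γ t ^ 2 + qC γ t ^ 2 = 1 := by
    intro t
    simp only [pC, qC]
    linear_combination ((deriv γ t).1 ^ 2 + (deriv γ t).2 ^ 2 + 1) * hunit t
  have hpc2 : Continuous fun t => pC γ t ^ 2 := hpc.pow 2
  have hqc2 : Continuous fun t => qC γ t ^ 2 := hqc.pow 2
  have hpqc : Continuous fun t => pC γ t * qC γ t := hpc.mul hqc
  have haM0 : 0 ≤ aCo γ L := setIntegral_nonneg measurableSet_Icc (fun t _ => sq_nonneg _)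
  have hbM0 : 0 ≤ bCo γ L := setIntegral_nonneg measurableSet_Icc (fun t _ => sq_nonneg _)
  have hexp : ∀ x : ℝ, ∫ t in Icc (0:ℝ) L, (pC γ t + x * qC γ t) ^ 2
      = aCo γ L + 2 * x * eCo γ L + x ^ 2 * bCo γ L := by
    intro x
    have hrw : ∀ t : ℝ, (pC γ t + x * qC γ t) ^ 2
        = pC γ t ^ 2 + 2 * x * (pC γ t * qC γ t) + x ^ 2 * qC γ t ^ 2 := by
      intro t; ring
    have iA : Integrable (fun t => pC γ t ^ 2) (volume.restrict (Icc (0:ℝ) L)) :=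
      hpc2.integrableOn_Icc
    have iB : Integrable (fun t => 2 * x * (pC γ t * qC γ t))
        (volume.restrict (Icc (0:ℝ) L)) := hpqc.integrableOn_Icc.const_mul _
    have iC : Integrable (fun t => x ^ 2 * qC γ t ^ 2)
        (volume.restrict (Icc (0:ℝ) L)) := hqc2.integrableOn_Icc.const_mul _
    have iAB : Integrable (fun t => pC γ t ^ 2 + 2 * x * (pC γ t * qC γ t))
        (volume.restrict (Icc (0:ℝ) L)) := iA.add iB
    rw [setIntegral_congr_fun measurableSet_Icc (fun t _ => hrw t),
        integral_add iAB iC, integral_add iA iB, integral_const_mul, integral_const_mul]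
    rfl
  have hCS : eCo γ L ^ 2 ≤ aCo γ L * bCo γ L := by
    have hquad : ∀ x : ℝ, 0 ≤ bCo γ L * (x * x) + 2 * eCo γ L * x + aCo γ L := by
      intro x
      have h0 := setIntegral_nonneg (μ := volume) (s := Icc (0:ℝ) L) measurableSet_Icc
        (fun t _ => sq_nonneg (pC γ t + x * qC γ t))
      rw [hexp x] at h0
      nlinarith [h0]
    have hdisc := discrim_le_zero hquad
    unfold discrim at hdisc
    nlinarith [hdisc]
  have habe : eCo γ L ^ 2 < aCo γ L * bCo γ L := by
    rcases hCS.lt_or_eq with h | heq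
    · exact h
    exfalso
    rcases hbM0.eq_or_lt with hb0 | hbpos
    · have hq0 : ∀ t ∈ Icc (0:ℝ) L, qC γ t ^ 2 = 0 :=
        aux_zero_of_integral hL hqc2 (fun t => sq_nonneg _) hb0.symm
      have hp1 : ∀ t ∈ Icc (0:ℝ) L, pC γ t ^ 2 = 1 ^ 2 := by
        intro t ht
        have h4 := hq0 t ht
        have h5 := hpq1 t
        nlinarith [h4, h5]
      exact aux_no_const hL hpc one_pos hp1 hint_p
    · set x0 : ℝ := -eCo γ L / bCo γ L with hx0
      have hbne : bCo γ L ≠ 0 := ne_of_gt hbpos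
      have hx1 : ∫ t in Icc (0:ℝ) L, (pC γ t + x0 * qC γ t) ^ 2 = 0 := by
        rw [hexp x0, hx0]
        have hfrac : aCo γ L + 2 * (-eCo γ L / bCo γ L) * eCo γ L
            + (-eCo γ L / bCo γ L) ^ 2 * bCo γ L
            = (aCo γ L * bCo γ L - eCo γ L ^ 2) / bCo γ L := by
          field_simp
          ring
        rw [hfrac, heq]
        simp
      have hr0 : ∀ t ∈ Icc (0:ℝ) L, (pC γ t + x0 * qC γ t) ^ 2 = 0 :=
        aux_zero_of_integral hL ((hpc.add (continuous_const.mul hqc)).pow 2)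
          (fun t => sq_nonneg _) hx1
      have h7 : (0:ℝ) < Real.sqrt (1 + x0 ^ 2) := Real.sqrt_pos.mpr (by positivity)
      have h6 : (Real.sqrt (1 + x0 ^ 2)) ^ 2 = 1 + x0 ^ 2 := Real.sq_sqrt (by positivity)
      have hq2 : ∀ t ∈ Icc (0:ℝ) L, qC γ t ^ 2 = ((Real.sqrt (1 + x0 ^ 2))⁻¹) ^ 2 := by
        intro t ht
        have h4 := hr0 t ht
        have h9 : pC γ t + x0 * qC γ t = 0 := sq_eq_zero_iff.mp h4
        have h8 : qC γ t ^ 2 * (1 + x0 ^ 2) = 1 := by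
          linear_combination (x0 * qC γ t - pC γ t) * h9 + hpq1 t
        have hx0pos : (0:ℝ) < 1 + x0 ^ 2 := by positivity
        rw [inv_pow, h6]
        field_simp
        linarith [h8]
      exact aux_no_const hL hqc (inv_pos.mpr h7) hq2 hint_q
  have haMpos : 0 < aCo γ L := by nlinarith [habe, sq_nonneg (eCo γ L), hbM0]
  have hbMpos : 0 < bCo γ L := by nlinarith [habe, sq_nonneg (eCo γ L), haM0]
  -- pointwise double-angle identity
  have hgid : ∀ θ : ℝ × ℝ, θ.1 ^ 2 + θ.2 ^ 2 = 1 → ∀ t : ℝ,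
      2 * dot θ (deriv γ t) ^ 2
        = 1 + (θ.1 ^ 2 - θ.2 ^ 2) * pC γ t + 2 * (θ.1 * θ.2) * qC γ t := by
    intro θ hθ t
    simp only [dot, pC, qC]
    linear_combination ((deriv γ t).1 ^ 2 + (deriv γ t).2 ^ 2) * hθ + hunit t
  have hI : ∀ θ θ' : ℝ × ℝ, θ.1 ^ 2 + θ.2 ^ 2 = 1 → θ'.1 ^ 2 + θ'.2 ^ 2 = 1 →
      (∫ t in Icc (0:ℝ) L, dot θ (deriv γ t) ^ 2 * dot θ' (deriv γ t) ^ 2)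
        = L / 4 + 1 / 4 * (aCo γ L * ((θ.1 ^ 2 - θ.2 ^ 2) * (θ'.1 ^ 2 - θ'.2 ^ 2))
            + bCo γ L * (2 * (θ.1 * θ.2) * (2 * (θ'.1 * θ'.2)))
            + eCo γ L * ((θ.1 ^ 2 - θ.2 ^ 2) * (2 * (θ'.1 * θ'.2))
              + (θ'.1 ^ 2 - θ'.2 ^ 2) * (2 * (θ.1 * θ.2)))) := by
    intro θ θ' hθ hθ'
    have hrw : ∀ t : ℝ, dot θ (deriv γ t) ^ 2 * dot θ' (deriv γ t) ^ 2
        = 1 / 4 + (((θ.1 ^ 2 - θ.2 ^ 2) + (θ'.1 ^ 2 - θ'.2 ^ 2)) / 4 * pC γ t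
          + (2 * (θ.1 * θ.2) + 2 * (θ'.1 * θ'.2)) / 4 * qC γ t
          + (θ.1 ^ 2 - θ.2 ^ 2) * (θ'.1 ^ 2 - θ'.2 ^ 2) / 4 * (pC γ t ^ 2)
          + 2 * (θ.1 * θ.2) * (2 * (θ'.1 * θ'.2)) / 4 * (qC γ t ^ 2)
          + ((θ.1 ^ 2 - θ.2 ^ 2) * (2 * (θ'.1 * θ'.2))
            + (θ'.1 ^ 2 - θ'.2 ^ 2) * (2 * (θ.1 * θ.2))) / 4 * (pC γ t * qC γ t)) := by
      intro t
      have h1 := hgid θ hθ t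
      have h2 := hgid θ' hθ' t
      linear_combination (dot θ' (deriv γ t) ^ 2 / 2) * h1
        + ((1 + (θ.1 ^ 2 - θ.2 ^ 2) * pC γ t + 2 * (θ.1 * θ.2) * qC γ t) / 4) * h2
    rw [setIntegral_congr_fun measurableSet_Icc (fun t _ => hrw t),
        aux_int6_Icc hL.le hpc hqc hpc2 hqc2 hpqc (1/4)
          (((θ.1 ^ 2 - θ.2 ^ 2) + (θ'.1 ^ 2 - θ'.2 ^ 2)) / 4)
          ((2 * (θ.1 * θ.2) + 2 * (θ'.1 * θ'.2)) / 4)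
          ((θ.1 ^ 2 - θ.2 ^ 2) * (θ'.1 ^ 2 - θ'.2 ^ 2) / 4)
          (2 * (θ.1 * θ.2) * (2 * (θ'.1 * θ'.2)) / 4)
          (((θ.1 ^ 2 - θ.2 ^ 2) * (2 * (θ'.1 * θ'.2))
            + (θ'.1 ^ 2 - θ'.2 ^ 2) * (2 * (θ.1 * θ.2))) / 4),
        hint_p, hint_q]
    simp only [aCo, bCo, eCo]
    ring
  -- pointwise bounds for the basic integral
  have hdot1 : ∀ θ : ℝ × ℝ, θ.1 ^ 2 + θ.2 ^ 2 = 1 → ∀ t : ℝ,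
      dot θ (deriv γ t) ^ 2 ≤ 1 := by
    intro θ hθ t
    have key : (θ.1 ^ 2 + θ.2 ^ 2) * ((deriv γ t).1 ^ 2 + (deriv γ t).2 ^ 2) = 1 := by
      rw [hθ, hunit t]; norm_num
    simp only [dot]
    nlinarith [key, sq_nonneg (θ.1 * (deriv γ t).2 - θ.2 * (deriv γ t).1)]
  have hIbd : ∀ θ θ' : ℝ × ℝ, θ.1 ^ 2 + θ.2 ^ 2 = 1 → θ'.1 ^ 2 + θ'.2 ^ 2 = 1 →
      0 ≤ (∫ t in Icc (0:ℝ) L, dot θ (deriv γ t) ^ 2 * dot θ' (deriv γ t) ^ 2)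
      ∧ (∫ t in Icc (0:ℝ) L, dot θ (deriv γ t) ^ 2 * dot θ' (deriv γ t) ^ 2) ≤ L / 2 := by
    intro θ θ' hθ hθ'
    constructor
    · exact setIntegral_nonneg measurableSet_Icc fun t _ => by positivity
    · calc (∫ t in Icc (0:ℝ) L, dot θ (deriv γ t) ^ 2 * dot θ' (deriv γ t) ^ 2)
          ≤ ∫ t in Icc (0:ℝ) L, dot θ' (deriv γ t) ^ 2 := by
            refine setIntegral_mono_on ((hdotc θ).mul (hdotc θ')).integrableOn_Icc
              (hdotc θ').integrableOn_Icc measurableSet_Icc (fun t _ => ?_)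
            exact mul_le_of_le_one_left (sq_nonneg _) (hdot1 θ hθ t)
        _ = L / 2 := hstat2 θ' hθ'
  -- μ-side moments and integrability
  have hPb : ∀ᵐ θ ∂μ, |θ.1 ^ 2 - θ.2 ^ 2| ≤ 1 := hae.mono fun θ hθ => by
    rw [abs_le]; constructor <;> nlinarith [sq_nonneg θ.1, sq_nonneg θ.2]
  have hQb : ∀ᵐ θ ∂μ, |2 * (θ.1 * θ.2)| ≤ 1 := hae.mono fun θ hθ => by
    rw [abs_le]; constructor <;> nlinarith [sq_nonneg (θ.1 - θ.2), sq_nonneg (θ.1 + θ.2)]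
  have hintμ : ∀ (f : ℝ × ℝ → ℝ) (C : ℝ), Continuous f → (∀ᵐ θ ∂μ, |f θ| ≤ C) →
      Integrable f μ := by
    intro f C hf hb
    exact ⟨hf.aestronglyMeasurable,
      HasFiniteIntegral.of_bounded (C := C) (hb.mono fun θ h => by rwa [Real.norm_eq_abs])⟩
  have hPc : Continuous fun θ : ℝ × ℝ => θ.1 ^ 2 - θ.2 ^ 2 :=
    (continuous_fst.pow 2).sub (continuous_snd.pow 2)
  have hQc : Continuous fun θ : ℝ × ℝ => 2 * (θ.1 * θ.2) :=
    continuous_const.mul (continuous_fst.mul continuous_snd)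
  have hIP : Integrable (fun θ : ℝ × ℝ => θ.1 ^ 2 - θ.2 ^ 2) μ := hintμ _ 1 hPc hPb
  have hIQ : Integrable (fun θ : ℝ × ℝ => 2 * (θ.1 * θ.2)) μ := hintμ _ 1 hQc hQb
  have hIP2 : Integrable (fun θ : ℝ × ℝ => (θ.1 ^ 2 - θ.2 ^ 2) ^ 2) μ :=
    hintμ _ 1 (hPc.pow 2) (hPb.mono fun θ h => by
      rw [abs_pow]; nlinarith [abs_nonneg (θ.1 ^ 2 - θ.2 ^ 2)])
  have hIPQ : Integrable (fun θ : ℝ × ℝ => (θ.1 ^ 2 - θ.2 ^ 2) * (2 * (θ.1 * θ.2))) μ :=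
    hintμ _ 1 (hPc.mul hQc) ((hPb.and hQb).mono fun θ h => by
      rw [abs_mul]; nlinarith [abs_nonneg (θ.1 ^ 2 - θ.2 ^ 2), abs_nonneg (2 * (θ.1 * θ.2)),
        h.1, h.2])
  have hIQ2 : Integrable (fun θ : ℝ × ℝ => (2 * (θ.1 * θ.2)) ^ 2) μ :=
    hintμ _ 1 (hQc.pow 2) (hQb.mono fun θ h => by
      rw [abs_pow]; nlinarith [abs_nonneg (2 * (θ.1 * θ.2))])
  obtain ⟨mP, hmP⟩ : ∃ x : ℝ, x = ∫ θ, (θ.1 ^ 2 - θ.2 ^ 2) ∂μ := ⟨_, rfl⟩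
  obtain ⟨mQ, hmQ⟩ : ∃ x : ℝ, x = ∫ θ, 2 * (θ.1 * θ.2) ∂μ := ⟨_, rfl⟩
  obtain ⟨sP, hsP⟩ : ∃ x : ℝ, x = ∫ θ, (θ.1 ^ 2 - θ.2 ^ 2) ^ 2 ∂μ := ⟨_, rfl⟩
  obtain ⟨sX, hsX⟩ : ∃ x : ℝ, x = ∫ θ, (θ.1 ^ 2 - θ.2 ^ 2) * (2 * (θ.1 * θ.2)) ∂μ := ⟨_, rfl⟩
  obtain ⟨sQ, hsQ⟩ : ∃ x : ℝ, x = ∫ θ, (2 * (θ.1 * θ.2)) ^ 2 ∂μ := ⟨_, rfl⟩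
  have hsP0 : 0 ≤ sP := by rw [hsP]; exact integral_nonneg fun θ => sq_nonneg _
  have hsQ0 : 0 ≤ sQ := by rw [hsQ]; exact integral_nonneg fun θ => sq_nonneg _
  have hsum : sP + sQ = 1 := by
    have h1 : ∫ θ, ((θ.1 ^ 2 - θ.2 ^ 2) ^ 2 + (2 * (θ.1 * θ.2)) ^ 2) ∂μ = sP + sQ := by
      rw [integral_add hIP2 hIQ2, ← hsP, ← hsQ]
    have h2 : ∫ θ, ((θ.1 ^ 2 - θ.2 ^ 2) ^ 2 + (2 * (θ.1 * θ.2)) ^ 2) ∂μ = 1 := by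
      have hc : ∀ᵐ θ ∂μ, (θ.1 ^ 2 - θ.2 ^ 2) ^ 2 + (2 * (θ.1 * θ.2)) ^ 2 = 1 :=
        hae.mono fun θ hθ => by linear_combination (θ.1 ^ 2 + θ.2 ^ 2 + 1) * hθ
      rw [integral_congr_ae hc]
      simp [measure_univ]
    linarith
  have hCSμ : sX ^ 2 ≤ sP * sQ := by
    have hquad : ∀ x : ℝ, 0 ≤ sQ * (x * x) + 2 * sX * x + sP := by
      intro x
      have h0 : 0 ≤ ∫ θ, ((θ.1 ^ 2 - θ.2 ^ 2) + x * (2 * (θ.1 * θ.2))) ^ 2 ∂μ :=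
        integral_nonneg fun θ => sq_nonneg _
      have hrwf : (fun θ : ℝ × ℝ => ((θ.1 ^ 2 - θ.2 ^ 2) + x * (2 * (θ.1 * θ.2))) ^ 2)
          = fun θ : ℝ × ℝ => (θ.1 ^ 2 - θ.2 ^ 2) ^ 2
            + 2 * x * ((θ.1 ^ 2 - θ.2 ^ 2) * (2 * (θ.1 * θ.2)))
            + x ^ 2 * (2 * (θ.1 * θ.2)) ^ 2 := by
        funext θ; ring
      rw [hrwf] at h0
      have iB : Integrable (fun θ : ℝ × ℝ =>
          2 * x * ((θ.1 ^ 2 - θ.2 ^ 2) * (2 * (θ.1 * θ.2)))) μ := hIPQ.const_mul _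
      have iC : Integrable (fun θ : ℝ × ℝ => x ^ 2 * (2 * (θ.1 * θ.2)) ^ 2) μ :=
        hIQ2.const_mul _
      have iAB : Integrable (fun θ : ℝ × ℝ => (θ.1 ^ 2 - θ.2 ^ 2) ^ 2
          + 2 * x * ((θ.1 ^ 2 - θ.2 ^ 2) * (2 * (θ.1 * θ.2)))) μ := hIP2.add iB
      rw [integral_add iAB iC, integral_add hIP2 iB, integral_const_mul,
          integral_const_mul, ← hsP, ← hsX, ← hsQ] at h0
      nlinarith [h0]
    have hdisc := discrim_le_zero hquad
    unfold discrim at hdisc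
    nlinarith [hdisc]
  -- the inner integral
  have hpoly : ∀ θ : ℝ × ℝ, θ.1 ^ 2 + θ.2 ^ 2 = 1 → ∀ᵐ θ' ∂μ,
      (∫ t in Icc (0:ℝ) L, dot θ (deriv γ t) ^ 2 * dot θ' (deriv γ t) ^ 2) ^ 2
        = L ^ 2 / 16
          + (L / 8 * (aCo γ L * (θ.1 ^ 2 - θ.2 ^ 2) + eCo γ L * (2 * (θ.1 * θ.2)))
                * (θ'.1 ^ 2 - θ'.2 ^ 2)
            + L / 8 * (bCo γ L * (2 * (θ.1 * θ.2)) + eCo γ L * (θ.1 ^ 2 - θ.2 ^ 2))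
                * (2 * (θ'.1 * θ'.2))
            + (aCo γ L * (θ.1 ^ 2 - θ.2 ^ 2) + eCo γ L * (2 * (θ.1 * θ.2))) ^ 2 / 16
                * (θ'.1 ^ 2 - θ'.2 ^ 2) ^ 2
            + (aCo γ L * (θ.1 ^ 2 - θ.2 ^ 2) + eCo γ L * (2 * (θ.1 * θ.2)))
                * (bCo γ L * (2 * (θ.1 * θ.2)) + eCo γ L * (θ.1 ^ 2 - θ.2 ^ 2)) / 8
                * ((θ'.1 ^ 2 - θ'.2 ^ 2) * (2 * (θ'.1 * θ'.2)))
            + (bCo γ L * (2 * (θ.1 * θ.2)) + eCo γ L * (θ.1 ^ 2 - θ.2 ^ 2)) ^ 2 / 16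
                * (2 * (θ'.1 * θ'.2)) ^ 2) := by
    intro θ hθ
    exact hae.mono fun θ' hθ' => by rw [hI θ θ' hθ hθ']; ring
  obtain ⟨K1, hK1⟩ : ∃ x : ℝ, x = L / 8 * (aCo γ L * mP + eCo γ L * mQ) := ⟨_, rfl⟩
  obtain ⟨K2, hK2⟩ : ∃ x : ℝ, x = L / 8 * (bCo γ L * mQ + eCo γ L * mP) := ⟨_, rfl⟩
  obtain ⟨K3, hK3⟩ : ∃ x : ℝ, x = (aCo γ L ^ 2 * sP + 2 * aCo γ L * eCo γ L * sX
      + eCo γ L ^ 2 * sQ) / 16 := ⟨_, rfl⟩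
  obtain ⟨K4, hK4⟩ : ∃ x : ℝ, x = (aCo γ L * eCo γ L * sP
      + (aCo γ L * bCo γ L + eCo γ L ^ 2) * sX + bCo γ L * eCo γ L * sQ) / 8 := ⟨_, rfl⟩
  obtain ⟨K5, hK5⟩ : ∃ x : ℝ, x = (eCo γ L ^ 2 * sP + 2 * bCo γ L * eCo γ L * sX
      + bCo γ L ^ 2 * sQ) / 16 := ⟨_, rfl⟩
  have hinner : ∀ θ : ℝ × ℝ, θ.1 ^ 2 + θ.2 ^ 2 = 1 →
      (∫ θ', (∫ t in Icc (0:ℝ) L, dot θ (deriv γ t) ^ 2 * dot θ' (deriv γ t) ^ 2) ^ 2 ∂μ)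
        = L ^ 2 / 16 + (K1 * (θ.1 ^ 2 - θ.2 ^ 2) + K2 * (2 * (θ.1 * θ.2))
            + K3 * (θ.1 ^ 2 - θ.2 ^ 2) ^ 2
            + K4 * ((θ.1 ^ 2 - θ.2 ^ 2) * (2 * (θ.1 * θ.2)))
            + K5 * (2 * (θ.1 * θ.2)) ^ 2) := by
    intro θ hθ
    rw [integral_congr_ae (hpoly θ hθ),
        aux_int6 hIP hIQ hIP2 hIPQ hIQ2 (L ^ 2 / 16)
          (L / 8 * (aCo γ L * (θ.1 ^ 2 - θ.2 ^ 2) + eCo γ L * (2 * (θ.1 * θ.2))))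
          (L / 8 * (bCo γ L * (2 * (θ.1 * θ.2)) + eCo γ L * (θ.1 ^ 2 - θ.2 ^ 2)))
          ((aCo γ L * (θ.1 ^ 2 - θ.2 ^ 2) + eCo γ L * (2 * (θ.1 * θ.2))) ^ 2 / 16)
          ((aCo γ L * (θ.1 ^ 2 - θ.2 ^ 2) + eCo γ L * (2 * (θ.1 * θ.2)))
            * (bCo γ L * (2 * (θ.1 * θ.2)) + eCo γ L * (θ.1 ^ 2 - θ.2 ^ 2)) / 8)
          ((bCo γ L * (2 * (θ.1 * θ.2)) + eCo γ L * (θ.1 ^ 2 - θ.2 ^ 2)) ^ 2 / 16),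
        ← hmP, ← hmQ, ← hsP, ← hsX, ← hsQ, hK1, hK2, hK3, hK4, hK5]
    ring
  have hAouter : Ameas γ L μ = ∫ θ,
      (L ^ 2 / 16 + (K1 * (θ.1 ^ 2 - θ.2 ^ 2) + K2 * (2 * (θ.1 * θ.2))
        + K3 * (θ.1 ^ 2 - θ.2 ^ 2) ^ 2
        + K4 * ((θ.1 ^ 2 - θ.2 ^ 2) * (2 * (θ.1 * θ.2)))
        + K5 * (2 * (θ.1 * θ.2)) ^ 2)) ∂μ := by
    unfold Ameas
    exact integral_congr_ae (hae.mono fun θ hθ => hinner θ hθ)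
  have hAeq : Ameas γ L μ = L ^ 2 / 16
      + L / 8 * (aCo γ L * mP ^ 2 + 2 * eCo γ L * mP * mQ + bCo γ L * mQ ^ 2)
      + 1 / 16 * (aCo γ L ^ 2 * sP ^ 2 + 4 * aCo γ L * eCo γ L * sP * sX
        + 2 * eCo γ L ^ 2 * sP * sQ + 2 * (aCo γ L * bCo γ L + eCo γ L ^ 2) * sX ^ 2
        + 4 * bCo γ L * eCo γ L * sX * sQ + bCo γ L ^ 2 * sQ ^ 2) := by
    rw [hAouter, aux_int6 hIP hIQ hIP2 hIPQ hIQ2 (L ^ 2 / 16) K1 K2 K3 K4 K5,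
        ← hmP, ← hmQ, ← hsP, ← hsX, ← hsQ, hK1, hK2, hK3, hK4, hK5]
    ring
  -- positivity pieces
  have hMid : 0 ≤ aCo γ L * mP ^ 2 + 2 * eCo γ L * mP * mQ + bCo γ L * mQ ^ 2 := by
    have hid2 : bCo γ L * (aCo γ L * mP ^ 2 + 2 * eCo γ L * mP * mQ + bCo γ L * mQ ^ 2)
        = (aCo γ L * bCo γ L - eCo γ L ^ 2) * mP ^ 2
          + (eCo γ L * mP + bCo γ L * mQ) ^ 2 := by ring
    have h2 : 0 ≤ bCo γ L * (aCo γ L * mP ^ 2 + 2 * eCo γ L * mP * mQ + bCo γ L * mQ ^ 2) := by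
      rw [hid2]
      exact add_nonneg (mul_nonneg (sub_nonneg.mpr hCS) (sq_nonneg mP)) (sq_nonneg _)
    calc (0:ℝ) ≤ bCo γ L * (aCo γ L * mP ^ 2 + 2 * eCo γ L * mP * mQ + bCo γ L * mQ ^ 2)
            / bCo γ L := div_nonneg h2 hbMpos.le
      _ = aCo γ L * mP ^ 2 + 2 * eCo γ L * mP * mQ + bCo γ L * mQ ^ 2 := by
          field_simp
  have hT : 0 < aCo γ L ^ 2 * sP ^ 2 + 4 * aCo γ L * eCo γ L * sP * sX
      + 2 * eCo γ L ^ 2 * sP * sQ + 2 * (aCo γ L * bCo γ L + eCo γ L ^ 2) * sX ^ 2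
      + 4 * bCo γ L * eCo γ L * sX * sQ + bCo γ L ^ 2 * sQ ^ 2 := by
    rcases hsQ0.eq_or_lt with h0 | hposQ
    · rw [← h0] at hCSμ
      have h1 : sX ^ 2 ≤ 0 := by nlinarith [hCSμ]
      have hx : sX = 0 := sq_eq_zero_iff.mp (le_antisymm h1 (sq_nonneg sX))
      have hsP1 : sP = 1 := by linarith [hsum]
      rw [← h0, hx, hsP1]
      linarith [pow_pos haMpos 2]
    · have hid3 : aCo γ L ^ 2 * (aCo γ L ^ 2 * sP ^ 2
          + 4 * aCo γ L * eCo γ L * sP * sX + 2 * eCo γ L ^ 2 * sP * sQ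
          + 2 * (aCo γ L * bCo γ L + eCo γ L ^ 2) * sX ^ 2
          + 4 * bCo γ L * eCo γ L * sX * sQ + bCo γ L ^ 2 * sQ ^ 2)
          = (aCo γ L ^ 2 * sP + 2 * aCo γ L * eCo γ L * sX + eCo γ L ^ 2 * sQ) ^ 2
            + 2 * (aCo γ L * bCo γ L - eCo γ L ^ 2) * (aCo γ L * sX + eCo γ L * sQ) ^ 2
            + (aCo γ L * bCo γ L - eCo γ L ^ 2) ^ 2 * sQ ^ 2 := by ring
      have key : 0 < aCo γ L ^ 2 * (aCo γ L ^ 2 * sP ^ 2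
          + 4 * aCo γ L * eCo γ L * sP * sX + 2 * eCo γ L ^ 2 * sP * sQ
          + 2 * (aCo γ L * bCo γ L + eCo γ L ^ 2) * sX ^ 2
          + 4 * bCo γ L * eCo γ L * sX * sQ + bCo γ L ^ 2 * sQ ^ 2) := by
        rw [hid3]
        have t1 : (0:ℝ) ≤ (aCo γ L ^ 2 * sP + 2 * aCo γ L * eCo γ L * sX
            + eCo γ L ^ 2 * sQ) ^ 2 := sq_nonneg _
        have t2 : (0:ℝ) ≤ 2 * (aCo γ L * bCo γ L - eCo γ L ^ 2)
            * (aCo γ L * sX + eCo γ L * sQ) ^ 2 :=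
          mul_nonneg (mul_nonneg (by norm_num) (sub_nonneg.mpr hCS)) (sq_nonneg _)
        have t3 : (0:ℝ) < (aCo γ L * bCo γ L - eCo γ L ^ 2) ^ 2 * sQ ^ 2 :=
          mul_pos (pow_pos (sub_pos.mpr habe) 2) (pow_pos hposQ 2)
        linarith
      have h2 : (0:ℝ) < aCo γ L ^ 2 := pow_pos haMpos 2
      calc (0:ℝ) < aCo γ L ^ 2 * (aCo γ L ^ 2 * sP ^ 2
            + 4 * aCo γ L * eCo γ L * sP * sX + 2 * eCo γ L ^ 2 * sP * sQ
            + 2 * (aCo γ L * bCo γ L + eCo γ L ^ 2) * sX ^ 2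
            + 4 * bCo γ L * eCo γ L * sX * sQ + bCo γ L ^ 2 * sQ ^ 2) / aCo γ L ^ 2 :=
          div_pos key h2
        _ = aCo γ L ^ 2 * sP ^ 2
            + 4 * aCo γ L * eCo γ L * sP * sX + 2 * eCo γ L ^ 2 * sP * sQ
            + 2 * (aCo γ L * bCo γ L + eCo γ L ^ 2) * sX ^ 2
            + 4 * bCo γ L * eCo γ L * sX * sQ + bCo γ L ^ 2 * sQ ^ 2 := by
          field_simp
  refine ⟨?_, ?_, ?_⟩
  · rw [hAeq]; linarith [mul_nonneg hL.le hMid, hT]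
  · -- upper bound
    have hb' : ∀ θ : ℝ × ℝ, θ.1 ^ 2 + θ.2 ^ 2 = 1 → ∀ᵐ θ' ∂μ,
        (∫ t in Icc (0:ℝ) L, dot θ (deriv γ t) ^ 2 * dot θ' (deriv γ t) ^ 2) ^ 2
          ≤ L ^ 2 / 4 := by
      intro θ hθ
      exact hae.mono fun θ' hθ' => by
        obtain ⟨h1, h2⟩ := hIbd θ θ' hθ hθ'
        exact le_trans (pow_le_pow_left₀ h1 h2 2) (le_of_eq (by ring))
    have hbint : ∀ θ : ℝ × ℝ, θ.1 ^ 2 + θ.2 ^ 2 = 1 →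
        Integrable (fun θ' : ℝ × ℝ =>
          (∫ t in Icc (0:ℝ) L, dot θ (deriv γ t) ^ 2 * dot θ' (deriv γ t) ^ 2) ^ 2) μ := by
      intro θ hθ
      have hrep : ∀ θ' : ℝ × ℝ,
          (∫ t in Icc (0:ℝ) L, dot θ (deriv γ t) ^ 2 * dot θ' (deriv γ t) ^ 2)
            = θ'.1 ^ 2 * (∫ t in Icc (0:ℝ) L, dot θ (deriv γ t) ^ 2 * (deriv γ t).1 ^ 2)
              + θ'.2 ^ 2 * (∫ t in Icc (0:ℝ) L, dot θ (deriv γ t) ^ 2 * (deriv γ t).2 ^ 2)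
              + 2 * (θ'.1 * θ'.2) * (∫ t in Icc (0:ℝ) L,
                  dot θ (deriv γ t) ^ 2 * ((deriv γ t).1 * (deriv γ t).2)) := by
        intro θ'
        have hrw : ∀ t : ℝ, dot θ (deriv γ t) ^ 2 * dot θ' (deriv γ t) ^ 2
            = θ'.1 ^ 2 * (dot θ (deriv γ t) ^ 2 * (deriv γ t).1 ^ 2)
              + θ'.2 ^ 2 * (dot θ (deriv γ t) ^ 2 * (deriv γ t).2 ^ 2)
              + 2 * (θ'.1 * θ'.2) * (dot θ (deriv γ t) ^ 2
                  * ((deriv γ t).1 * (deriv γ t).2)) := by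
          intro t; simp only [dot]; ring
        have iA : Integrable (fun t => θ'.1 ^ 2 * (dot θ (deriv γ t) ^ 2 * (deriv γ t).1 ^ 2))
            (volume.restrict (Icc (0:ℝ) L)) :=
          (((hdotc θ).mul hcu2).integrableOn_Icc).const_mul _
        have iB : Integrable (fun t => θ'.2 ^ 2 * (dot θ (deriv γ t) ^ 2 * (deriv γ t).2 ^ 2))
            (volume.restrict (Icc (0:ℝ) L)) :=
          (((hdotc θ).mul hcv2).integrableOn_Icc).const_mul _
        have iC : Integrable (fun t => 2 * (θ'.1 * θ'.2)
            * (dot θ (deriv γ t) ^ 2 * ((deriv γ t).1 * (deriv γ t).2)))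
            (volume.restrict (Icc (0:ℝ) L)) :=
          (((hdotc θ).mul hcuv).integrableOn_Icc).const_mul _
        have iAB : Integrable (fun t =>
            θ'.1 ^ 2 * (dot θ (deriv γ t) ^ 2 * (deriv γ t).1 ^ 2)
            + θ'.2 ^ 2 * (dot θ (deriv γ t) ^ 2 * (deriv γ t).2 ^ 2))
            (volume.restrict (Icc (0:ℝ) L)) := iA.add iB
        rw [setIntegral_congr_fun measurableSet_Icc (fun t _ => hrw t),
            integral_add iAB iC, integral_add iA iB,
            integral_const_mul, integral_const_mul, integral_const_mul]
      have hfun : (fun θ' : ℝ × ℝ =>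
          (∫ t in Icc (0:ℝ) L, dot θ (deriv γ t) ^ 2 * dot θ' (deriv γ t) ^ 2) ^ 2)
          = fun θ' : ℝ × ℝ =>
            (θ'.1 ^ 2 * (∫ t in Icc (0:ℝ) L, dot θ (deriv γ t) ^ 2 * (deriv γ t).1 ^ 2)
              + θ'.2 ^ 2 * (∫ t in Icc (0:ℝ) L, dot θ (deriv γ t) ^ 2 * (deriv γ t).2 ^ 2)
              + 2 * (θ'.1 * θ'.2) * (∫ t in Icc (0:ℝ) L,
                  dot θ (deriv γ t) ^ 2 * ((deriv γ t).1 * (deriv γ t).2))) ^ 2 := by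
        funext θ'
        rw [hrep θ']
      refine ⟨?_, HasFiniteIntegral.of_bounded (C := L ^ 2 / 4)
        ((hb' θ hθ).mono fun θ' hh => ?_)⟩
      · rw [hfun]
        have hcont : Continuous (fun θ' : ℝ × ℝ =>
            θ'.1 ^ 2 * (∫ t in Icc (0:ℝ) L, dot θ (deriv γ t) ^ 2 * (deriv γ t).1 ^ 2)
            + θ'.2 ^ 2 * (∫ t in Icc (0:ℝ) L, dot θ (deriv γ t) ^ 2 * (deriv γ t).2 ^ 2)
            + 2 * (θ'.1 * θ'.2) * (∫ t in Icc (0:ℝ) L,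
                dot θ (deriv γ t) ^ 2 * ((deriv γ t).1 * (deriv γ t).2))) :=
          (((continuous_fst.pow 2).mul continuous_const).add
            ((continuous_snd.pow 2).mul continuous_const)).add
            ((continuous_const.mul (continuous_fst.mul continuous_snd)).mul continuous_const)
        exact (hcont.pow 2).aestronglyMeasurable
      · rw [Real.norm_eq_abs, abs_of_nonneg (sq_nonneg _)]
        exact hh
    have hRHSle : ∀ᵐ θ ∂μ,
        (L ^ 2 / 16 + (K1 * (θ.1 ^ 2 - θ.2 ^ 2) + K2 * (2 * (θ.1 * θ.2))
          + K3 * (θ.1 ^ 2 - θ.2 ^ 2) ^ 2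
          + K4 * ((θ.1 ^ 2 - θ.2 ^ 2) * (2 * (θ.1 * θ.2)))
          + K5 * (2 * (θ.1 * θ.2)) ^ 2)) ≤ L ^ 2 / 4 := by
      refine hae.mono fun θ hθ => ?_
      rw [← hinner θ hθ]
      calc (∫ θ', (∫ t in Icc (0:ℝ) L,
              dot θ (deriv γ t) ^ 2 * dot θ' (deriv γ t) ^ 2) ^ 2 ∂μ)
          ≤ ∫ _θ', L ^ 2 / 4 ∂μ :=
            integral_mono_ae (hbint θ hθ) (integrable_const _) (hb' θ hθ)
        _ = L ^ 2 / 4 := by simp [measure_univ]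
    have hRHSint : Integrable (fun θ : ℝ × ℝ =>
        L ^ 2 / 16 + (K1 * (θ.1 ^ 2 - θ.2 ^ 2) + K2 * (2 * (θ.1 * θ.2))
          + K3 * (θ.1 ^ 2 - θ.2 ^ 2) ^ 2
          + K4 * ((θ.1 ^ 2 - θ.2 ^ 2) * (2 * (θ.1 * θ.2)))
          + K5 * (2 * (θ.1 * θ.2)) ^ 2)) μ :=
      (integrable_const _).add (((((hIP.const_mul K1).add (hIQ.const_mul K2)).add
        (hIP2.const_mul K3)).add (hIPQ.const_mul K4)).add (hIQ2.const_mul K5))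
    calc Ameas γ L μ
        = ∫ θ, (L ^ 2 / 16 + (K1 * (θ.1 ^ 2 - θ.2 ^ 2) + K2 * (2 * (θ.1 * θ.2))
            + K3 * (θ.1 ^ 2 - θ.2 ^ 2) ^ 2
            + K4 * ((θ.1 ^ 2 - θ.2 ^ 2) * (2 * (θ.1 * θ.2)))
            + K5 * (2 * (θ.1 * θ.2)) ^ 2)) ∂μ := hAouter
      _ ≤ ∫ _θ, L ^ 2 / 4 ∂μ :=
          integral_mono_ae hRHSint (integrable_const _) hRHSle
      _ = L ^ 2 / 4 := by simp [measure_univ]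
  · rw [hAeq]; linarith [mul_nonneg hL.le hMid, hT]

end AmeasMain


/-- for a static curve, `L²/16 ≤ A_C(μ) ≤ L²/4` and
`16 A_C(μ) − L² > 0` for every `π/2`-rotation invariant probability measure `μ` on `S¹`. -/
theorem Ameas_bounds_static
    (γ : ℝ → ℝ × ℝ) (L : ℝ) (hL : 0 < L)
    (hsmooth : ContDiff ℝ (⊤ : ℕ∞) γ)
    (hunit : ∀ t, (deriv γ t).1 ^ 2 + (deriv γ t).2 ^ 2 = 1)
    (hcurv : ∀ t, deriv (deriv γ) t ≠ 0)
    (hstatic : IsStatic γ L) :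
    ∀ μ : Measure (ℝ × ℝ), IsCircleProb μ →
      Measure.map (fun θ : ℝ × ℝ => (-θ.2, θ.1)) μ = μ →
      L ^ 2 / 16 ≤ Ameas γ L μ ∧ Ameas γ L μ ≤ L ^ 2 / 4 ∧
        0 < 16 * Ameas γ L μ - L ^ 2 := by
  intro μ hμ _
  have hd : Continuous (deriv γ) := (contDiff_infty_iff_deriv.mp hsmooth).2.continuous
  exact aux_main γ L hL hd hunit hstatic μ hμ

end
end

section
/- Assume {n} ⊂ S is a δ-separated sequence. Then the minimum of ‖λ₁ + λ₂ + λ₃ + λ₄‖ over all quadruples λ₁, λ₂, λ₃, λ₄ ∈ Λ_n with λ₁ + λ₂ + λ₃ + λ₄ ≠ 0 satisfies min ‖λ₁ + λ₂ + λ₃ + λ₄‖ ≫ n^{2δ}, with an absolute implied constant. In particular, N_n^{-2} · Σ over quadruples λ₁, λ₂, λ₃, λ₄ ∈ Λ_n with λ₁ + λ₂ + λ₃ + λ₄ ≠ 0 of 1/‖λ₁ + λ₂ + λ₃ + λ₄‖ = o(1) as n → ∞ along the sequence. -/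
open MeasureTheory ProbabilityTheory Real Filter Topology
open scoped ENNReal

noncomputable section

-- Auxiliary lemmas

def toC (l : ℤ × ℤ) : ℂ := ⟨(l.1 : ℝ), (l.2 : ℝ)⟩

lemma toC_add (l l' : ℤ × ℤ) : toC (l + l') = toC l + toC l' := by
  apply Complex.ext <;> simp [toC, Complex.add_re, Complex.add_im] <;> push_cast <;> ring

lemma toC_neg (l : ℤ × ℤ) : toC (-l) = - toC l := by
  apply Complex.ext <;> simp [toC] 

lemma abs_toC (l : ℤ × ℤ) : ‖toC l‖ = inorm l := by
  rw [Complex.norm_def, inorm]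
  simp only [toC, Complex.normSq_mk]
  ring_nf

lemma mem_latticePoints {n : ℕ} {l : ℤ × ℤ} :
    l ∈ latticePoints n ↔ l.1 ^ 2 + l.2 ^ 2 = (n : ℤ) := by
  constructor
  · intro h; exact (Finset.mem_filter.mp h).2
  · intro h
    refine Finset.mem_filter.mpr ⟨?_, h⟩
    have h1 : l.1 ^ 2 ≤ (n : ℤ) := by nlinarith [sq_nonneg l.2]
    have h2 : l.2 ^ 2 ≤ (n : ℤ) := by nlinarith [sq_nonneg l.1]
    have b1 : l.1 ≤ (n : ℤ) ∧ -(n:ℤ) ≤ l.1 := by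
      constructor <;> nlinarith [sq_nonneg (l.1 - 1), sq_nonneg (l.1 + 1)]
    have b2 : l.2 ≤ (n : ℤ) ∧ -(n:ℤ) ≤ l.2 := by
      constructor <;> nlinarith [sq_nonneg (l.2 - 1), sq_nonneg (l.2 + 1)]
    rw [Finset.mem_Icc]
    exact ⟨⟨b1.2, b2.2⟩, ⟨b1.1, b2.1⟩⟩

lemma neg_mem_latticePoints {n : ℕ} {l : ℤ × ℤ} (h : l ∈ latticePoints n) :
    -l ∈ latticePoints n := by
  rw [mem_latticePoints] at h ⊢
  simpa using h

lemma ne_zero_of_mem {n : ℕ} (hn : 1 ≤ n) {l : ℤ × ℤ} (h : l ∈ latticePoints n) :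
    l ≠ 0 := by
  rw [mem_latticePoints] at h
  intro h0
  rw [h0] at h
  simp at h
  omega

lemma abs_toC_of_mem {n : ℕ} {l : ℤ × ℤ} (h : l ∈ latticePoints n) :
    ‖toC l‖ = Real.sqrt n := by
  rw [abs_toC, inorm]
  congr 1
  rw [mem_latticePoints] at h
  have h2 := congrArg (Int.cast : ℤ → ℝ) h
  push_cast at h2
  push_cast
  linarith

lemma key_identity (u1 u2 u3 u4 : ℂ) (n1 : u1 ≠ 0) (n2 : u2 ≠ 0) (n3 : u3 ≠ 0) (n4 : u4 ≠ 0) :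
    (u1 - u3) * (u1 - u4) * ((u2 - u3) * (u2 - u4)) =
      u1 * u2 * (u3 * u4) * ((u1 + u2 - u3 - u4) *
        ((u1)⁻¹ + (u2)⁻¹ - (u3)⁻¹ - (u4)⁻¹)) + (u3 * u4 - u1 * u2) ^ 2 := by
  field_simp; ring

lemma key_identity2 (u1 u2 u3 u4 : ℂ) (n1 : u1 ≠ 0) (n2 : u2 ≠ 0) (n3 : u3 ≠ 0) (n4 : u4 ≠ 0) :
    (u1 + u2) * (u3 * u4 - u1 * u2) =
      u1 * u2 * (u3 * u4 * ((u1)⁻¹ + (u2)⁻¹ - (u3)⁻¹ - (u4)⁻¹))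
        - u1 * u2 * (u1 + u2 - u3 - u4) := by
  field_simp; ring

lemma abs_sub_le' (a b : ℂ) : ‖a - b‖ ≤ ‖a‖ + ‖b‖ := by
  simpa [sub_eq_add_neg] using norm_add_le a (-b)

lemma core_lemma (u1 u2 u3 u4 : ℂ) (h1 : ‖u1‖ = 1) (h2 : ‖u2‖ = 1)
    (h3 : ‖u3‖ = 1) (h4 : ‖u4‖ = 1) (ε : ℝ) (hε : 0 ≤ ε)
    (hp : 1/4 ≤ ‖u1 + u2‖)
    (c13 : ε ≤ ‖u1 - u3‖) (c14 : ε ≤ ‖u1 - u4‖)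
    (c23 : ε ≤ ‖u2 - u3‖) (c24 : ε ≤ ‖u2 - u4‖) :
    ε ^ 2 ≤ 9 * ‖u1 + u2 - u3 - u4‖ := by
  have n1 : u1 ≠ 0 := by intro h; rw [h] at h1; simp at h1
  have n2 : u2 ≠ 0 := by intro h; rw [h] at h2; simp at h2
  have n3 : u3 ≠ 0 := by intro h; rw [h] at h3; simp at h3
  have n4 : u4 ≠ 0 := by intro h; rw [h] at h4; simp at h4
  have hcw : (u1)⁻¹ + (u2)⁻¹ - (u3)⁻¹ - (u4)⁻¹ = (starRingEnd ℂ) (u1 + u2 - u3 - u4) := by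
    rw [Complex.inv_eq_conj (by rw [h1]),
        Complex.inv_eq_conj (by rw [h2]),
        Complex.inv_eq_conj (by rw [h3]),
        Complex.inv_eq_conj (by rw [h4])]
    simp [map_add, map_sub]
  set W := ‖u1 + u2 - u3 - u4‖ with hW
  have hW0 : 0 ≤ W := norm_nonneg _
  have hD : ‖u3 * u4 - u1 * u2‖ ≤ 8 * W := by
    have e2 := key_identity2 u1 u2 u3 u4 n1 n2 n3 n4
    rw [hcw] at e2
    have hb : ‖(u1 + u2) * (u3 * u4 - u1 * u2)‖ ≤ 2 * W := by
      rw [e2]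
      calc ‖u1 * u2 * (u3 * u4 * (starRingEnd ℂ) (u1 + u2 - u3 - u4))
              - u1 * u2 * (u1 + u2 - u3 - u4)‖
          ≤ ‖u1 * u2 * (u3 * u4 * (starRingEnd ℂ) (u1 + u2 - u3 - u4))‖
            + ‖u1 * u2 * (u1 + u2 - u3 - u4)‖ := abs_sub_le' _ _
        _ ≤ 2 * W := by
            simp only [norm_mul, h1, h2, h3, h4, Complex.norm_conj, ← hW]
            nlinarith
    rw [norm_mul] at hb
    nlinarith [norm_nonneg (u3 * u4 - u1 * u2)]
  have e1 := key_identity u1 u2 u3 u4 n1 n2 n3 n4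
  rw [hcw] at e1
  have lhs_ge : ε ^ 4 ≤ ‖(u1 - u3) * (u1 - u4) * ((u2 - u3) * (u2 - u4))‖ := by
    rw [norm_mul, norm_mul, norm_mul]
    calc ε ^ 4 = ε * ε * (ε * ε) := by ring
      _ ≤ _ := by
        apply mul_le_mul (mul_le_mul c13 c14 hε ((norm_nonneg _)))
          (mul_le_mul c23 c24 hε ((norm_nonneg _)))
          (by positivity) (by positivity)
  have rhs_le : ‖(u1 - u3) * (u1 - u4) * ((u2 - u3) * (u2 - u4))‖ ≤ 65 * W ^ 2 := by
    rw [e1]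
    calc ‖u1 * u2 * (u3 * u4) * ((u1 + u2 - u3 - u4) * (starRingEnd ℂ) (u1 + u2 - u3 - u4))
            + (u3 * u4 - u1 * u2) ^ 2‖
        ≤ ‖u1 * u2 * (u3 * u4) * ((u1 + u2 - u3 - u4) * (starRingEnd ℂ) (u1 + u2 - u3 - u4))‖
          + ‖(u3 * u4 - u1 * u2) ^ 2‖ := norm_add_le _ _
      _ ≤ W ^ 2 + (8 * W) ^ 2 := by
          gcongr ?_ + ?_
          · simp only [norm_mul, h1, h2, h3, h4, Complex.norm_conj, ← hW]
            nlinarith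
          · rw [norm_pow]
            exact pow_le_pow_left₀ (norm_nonneg _) hD 2
      _ ≤ 65 * W ^ 2 := by nlinarith
  nlinarith [sq_nonneg ε, sq_nonneg (ε^2 - 9*W)]

lemma abs_sub_le'' (a b : ℂ) : ‖a - b‖ ≤ ‖a‖ + ‖b‖ := by
  simpa [sub_eq_add_neg] using norm_add_le a (-b)

lemma le_abs_ring {x : ℝ} {a b : ℂ} (h : x ≤ ‖a‖) (e : b = a) :
    x ≤ ‖b‖ := by rw [e]; exact h

lemma le_abs_ring_neg {x : ℝ} {a b : ℂ} (h : x ≤ ‖a‖) (e : b = -a) :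
    x ≤ ‖b‖ := by rw [e, norm_neg]; exact h

lemma main_lemma (u1 u2 u3 u4 : ℂ) (h1 : ‖u1‖ = 1) (h2 : ‖u2‖ = 1)
    (h3 : ‖u3‖ = 1) (h4 : ‖u4‖ = 1) (ε : ℝ) (hε : 0 ≤ ε)
    (s12 : ε ≤ ‖u1 + u2‖) (s34 : ε ≤ ‖u3 + u4‖)
    (c13 : ε ≤ ‖u1 - u3‖) (c14 : ε ≤ ‖u1 - u4‖)
    (c23 : ε ≤ ‖u2 - u3‖) (c24 : ε ≤ ‖u2 - u4‖) :
    ε ^ 2 ≤ 800 * ‖u1 + u2 - u3 - u4‖ := by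
  set W := ‖u1 + u2 - u3 - u4‖ with hW
  have hW0 : 0 ≤ W := norm_nonneg _
  set ε' := min ε (1/4) with hε'
  have hε'0 : 0 ≤ ε' := le_min hε (by norm_num)
  have hε'ε : ε' ≤ ε := min_le_left _ _
  have hε'q : ε' ≤ 1/4 := min_le_right _ _
  have inner : ε' ^ 2 ≤ 11 * W := by
    by_contra hcon
    push_neg at hcon
    have hWs : W < ε' ^ 2 / 11 := by linarith
    have hWs' : W < 1 / 176 := by nlinarith
    have done9 : ¬ (ε' ^ 2 ≤ 9 * W) := by nlinarith
    by_cases hp : 1/4 ≤ ‖u1 + u2‖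
    · exact done9 (core_lemma u1 u2 u3 u4 h1 h2 h3 h4 ε' hε'0 hp
        (le_trans hε'ε c13) (le_trans hε'ε c14) (le_trans hε'ε c23) (le_trans hε'ε c24))
    · push_neg at hp
      have hq : ‖u3 + u4‖ < 0.26 := by
        have t := norm_add_le (u1 + u2) (-(u1 + u2 - u3 - u4))
        have e : (u1 + u2) + (-(u1 + u2 - u3 - u4)) = u3 + u4 := by ring
        rw [e, norm_neg, ← hW] at t
        linarith
      have hsum : (1.74 : ℝ) ≤ ‖(u1 - u3) + (u1 - u4)‖ := by
        have t := norm_add_le (2 * u1 - (u3 + u4)) (u3 + u4)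
        have e : (2 * u1 - (u3 + u4)) + (u3 + u4) = 2 * u1 := by ring
        rw [e] at t
        have h2u : ‖2 * u1‖ = 2 := by rw [norm_mul, h1]; simp
        rw [h2u] at t
        have e2 : (u1 - u3) + (u1 - u4) = 2 * u1 - (u3 + u4) := by ring
        rw [e2]
        linarith
      have hmax : 1/4 ≤ ‖u1 - u3‖ ∨ 1/4 ≤ ‖u1 - u4‖ := by
        by_contra hh
        push_neg at hh
        have := norm_add_le (u1 - u3) (u1 - u4)
        linarith [hh.1, hh.2]
      rcases hmax with hc | hc
      · have key := core_lemma u1 (-u3) (-u2) u4 h1 (by simpa using h3) (by simpa using h2) h4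
          ε' hε'0 (le_abs_ring hc (by ring))
          (le_abs_ring (le_trans hε'ε s12) (by ring))
          (le_abs_ring (le_trans hε'ε c14) (by ring))
          (le_abs_ring (le_trans hε'ε c23) (by ring))
          (le_abs_ring_neg (le_trans hε'ε s34) (by ring))
        have ek : ‖u1 + -u3 - -u2 - u4‖ = W := by
          rw [hW]; exact congrArg (‖·‖) (by ring)
        rw [ek] at key
        exact done9 key
      · have key := core_lemma u1 (-u4) (-u2) u3 h1 (by simpa using h4) (by simpa using h2) h3
          ε' hε'0 (le_abs_ring hc (by ring))
          (le_abs_ring (le_trans hε'ε s12) (by ring))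
          (le_abs_ring (le_trans hε'ε c13) (by ring))
          (le_abs_ring (le_trans hε'ε c24) (by ring))
          (le_abs_ring_neg (le_trans hε'ε s34) (by ring))
        have ek : ‖u1 + -u4 - -u2 - u3‖ = W := by
          rw [hW]; exact congrArg (‖·‖) (by ring)
        rw [ek] at key
        exact done9 key
  have hε2 : ε ≤ 2 := by
    have t := abs_sub_le'' u1 u3
    rw [h1, h3] at t
    linarith [c13]
  rcases le_or_gt ε (1/4) with h | h
  · have he : ε' = ε := min_eq_left h
    rw [he] at inner
    linarith
  · have he : ε' = 1/4 := min_eq_right h.le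
    rw [he] at inner
    nlinarith

lemma part1_main (δ c : ℝ) (hc : 0 < c) (n : ℕ) (hn : 1 ≤ n)
    (l0 : ℤ × ℤ) (hl0 : l0 ∈ latticePoints n)
    (hsep : ∀ l ∈ latticePoints n, ∀ l' ∈ latticePoints n, l ≠ l' →
      c * (n : ℝ) ^ ((1 : ℝ) / 4 + δ) ≤ inorm (l - l')) :
    ∀ l1 ∈ latticePoints n, ∀ l2 ∈ latticePoints n,
    ∀ l3 ∈ latticePoints n, ∀ l4 ∈ latticePoints n,
      l1 + l2 + l3 + l4 ≠ 0 →
      c ^ 2 / 800 * (n : ℝ) ^ (2 * δ) ≤ inorm (l1 + l2 + l3 + l4) := by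
  intro l1 h1 l2 h2 l3 h3 l4 h4 hne
  have hx0 : (0 : ℝ) < (n : ℝ) := by exact_mod_cast hn
  have hsq0 : (0 : ℝ) < Real.sqrt n := Real.sqrt_pos.mpr hx0
  have hsqr : Real.sqrt (n : ℝ) = (n : ℝ) ^ ((1:ℝ)/2) := Real.sqrt_eq_rpow _
  have hE1 : (n : ℝ) ^ ((1:ℝ)/4 + δ) = (n : ℝ) ^ (δ - 1/4) * Real.sqrt n := by
    rw [hsqr, ← Real.rpow_add hx0]; ring_nf
  -- pair separation
  have hpair : ∀ x ∈ latticePoints n, ∀ y ∈ latticePoints n, x + y ≠ 0 →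
      c * (n : ℝ) ^ ((1:ℝ)/4 + δ) ≤ inorm (x + y) := by
    intro x hxm y hym hxy
    have hne' : x ≠ -y := fun h => hxy (by rw [h]; ring)
    have := hsep x hxm (-y) (neg_mem_latticePoints hym) hne'
    rwa [sub_neg_eq_add] at this
  -- antipodal bound : c * n^(δ-1/4) ≤ 2
  have hc2 : c * (n : ℝ) ^ (δ - 1/4) ≤ 2 := by
    have hl0ne : l0 ≠ -l0 := by
      intro h
      have hll : l0 + l0 = 0 := by nth_rewrite 2 [h]; exact add_neg_cancel l0
      have ha := congrArg Prod.fst hll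
      have hb := congrArg Prod.snd hll
      simp only [Prod.fst_add, Prod.snd_add, Prod.fst_zero, Prod.snd_zero] at ha hb
      have hz1 : l0.1 = 0 := by omega
      have hz2 : l0.2 = 0 := by omega
      exact ne_zero_of_mem hn hl0 (Prod.ext hz1 hz2)
    have hb := hsep l0 hl0 (-l0) (neg_mem_latticePoints hl0) hl0ne
    rw [sub_neg_eq_add] at hb
    have : inorm (l0 + l0) = 2 * Real.sqrt n := by
      rw [← abs_toC, toC_add, show toC l0 + toC l0 = 2 * toC l0 by ring, norm_mul,
        abs_toC_of_mem hl0]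
      simp
    rw [this, hE1] at hb
    have hb' : (c * (n:ℝ) ^ (δ - 1/4)) * Real.sqrt n ≤ 2 * Real.sqrt n := by
      rw [mul_assoc]; exact hb
    exact le_of_mul_le_mul_right hb' hsq0
  set ε := c * (n : ℝ) ^ (δ - 1/4) with hε
  have hε0 : 0 < ε := by positivity
  -- normalized pair bound
  have hpairn : ∀ x ∈ latticePoints n, ∀ y ∈ latticePoints n, x + y ≠ 0 →
      ε ≤ inorm (x + y) / Real.sqrt n := by
    intro x hxm y hym hxy
    rw [le_div_iff₀ hsq0]
    have hq := hpair x hxm y hym hxy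
    rw [hE1] at hq
    calc ε * Real.sqrt n = c * ((n:ℝ) ^ (δ - 1/4) * Real.sqrt n) := by rw [hε]; ring
      _ ≤ inorm (x + y) := hq
  -- case A : some pair cancels
  have caseA : ∀ x ∈ latticePoints n, ∀ y ∈ latticePoints n, x + y ≠ 0 →
      c ^ 2 / 800 * (n : ℝ) ^ (2 * δ) ≤ inorm (x + y) := by
    intro x hxm y hym hxy
    have hE3 : (n : ℝ) ^ (2 * δ) = (n : ℝ) ^ (δ - 1/4) * (n : ℝ) ^ ((1:ℝ)/4 + δ) := by
      rw [← Real.rpow_add hx0]; ring_nf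
    have h1' := hpair x hxm y hym hxy
    have hp1 : (0:ℝ) < (n : ℝ) ^ ((1:ℝ)/4 + δ) := by positivity
    have hp2 : (0:ℝ) ≤ (n : ℝ) ^ (δ - 1/4) := by positivity
    calc c ^ 2 / 800 * (n : ℝ) ^ (2 * δ)
        = c / 800 * (c * (n : ℝ) ^ (δ - 1/4)) * (n : ℝ) ^ ((1:ℝ)/4 + δ) := by
          rw [hE3]; ring
      _ ≤ c / 800 * 2 * (n : ℝ) ^ ((1:ℝ)/4 + δ) := by
          have : c / 800 * (c * (n : ℝ) ^ (δ - 1/4)) ≤ c / 800 * 2 :=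
            mul_le_mul_of_nonneg_left hc2 (by positivity)
          exact mul_le_mul_of_nonneg_right this hp1.le
      _ ≤ c * (n : ℝ) ^ ((1:ℝ)/4 + δ) := by nlinarith
      _ ≤ inorm (x + y) := h1'
  by_cases hz12 : l1 + l2 = 0
  · have hv : l1 + l2 + l3 + l4 = l3 + l4 := by rw [show l1+l2+l3+l4 = (l1+l2)+(l3+l4) by ring, hz12, zero_add]
    rw [hv] at hne ⊢
    exact caseA l3 h3 l4 h4 hne
  by_cases hz34 : l3 + l4 = 0
  · have hv : l1 + l2 + l3 + l4 = l1 + l2 := by rw [show l1+l2+l3+l4 = (l1+l2)+(l3+l4) by ring, hz34, add_zero]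
    rw [hv] at hne ⊢
    exact caseA l1 h1 l2 h2 hne
  by_cases hz13 : l1 + l3 = 0
  · have hv : l1 + l2 + l3 + l4 = l2 + l4 := by rw [show l1+l2+l3+l4 = (l1+l3)+(l2+l4) by ring, hz13, zero_add]
    rw [hv] at hne ⊢
    exact caseA l2 h2 l4 h4 hne
  by_cases hz14 : l1 + l4 = 0
  · have hv : l1 + l2 + l3 + l4 = l2 + l3 := by rw [show l1+l2+l3+l4 = (l1+l4)+(l2+l3) by ring, hz14, zero_add]
    rw [hv] at hne ⊢
    exact caseA l2 h2 l3 h3 hne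
  by_cases hz23 : l2 + l3 = 0
  · have hv : l1 + l2 + l3 + l4 = l1 + l4 := by rw [show l1+l2+l3+l4 = (l2+l3)+(l1+l4) by ring, hz23, zero_add]
    rw [hv] at hne ⊢
    exact caseA l1 h1 l4 h4 hne
  by_cases hz24 : l2 + l4 = 0
  · have hv : l1 + l2 + l3 + l4 = l1 + l3 := by rw [show l1+l2+l3+l4 = (l2+l4)+(l1+l3) by ring, hz24, zero_add]
    rw [hv] at hne ⊢
    exact caseA l1 h1 l3 h3 hne
  -- main case
  · set s : ℂ := ((Real.sqrt n : ℝ) : ℂ) with hs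
    have hsne : s ≠ 0 := by
      simp only [hs, ne_eq, Complex.ofReal_eq_zero]
      exact hsq0.ne'
    have habs_s : ‖s‖ = Real.sqrt n := by
      rw [hs, Complex.norm_real, Real.norm_eq_abs, abs_of_pos hsq0]
    have hu : ∀ m : ℤ × ℤ, ‖toC m / s‖ = inorm m / Real.sqrt n := by
      intro m
      rw [norm_div, abs_toC, habs_s]
    have hunit : ∀ m : ℤ × ℤ, m ∈ latticePoints n → ‖toC m / s‖ = 1 := by
      intro m hm
      rw [norm_div, abs_toC_of_mem hm, habs_s, div_self hsq0.ne']
    have hsum : ∀ x y : ℤ × ℤ, toC x / s + toC y / s = toC (x + y) / s := by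
      intro x y
      rw [toC_add, ← add_div]
    have hdiff : ∀ x y : ℤ × ℤ, toC x / s - toC (-y) / s = toC (x + y) / s := by
      intro x y
      rw [toC_neg, toC_add, sub_eq_add_neg, neg_div, neg_neg, ← add_div]
    have key := main_lemma (toC l1 / s) (toC l2 / s) (toC (-l3) / s) (toC (-l4) / s)
      (hunit l1 h1) (hunit l2 h2) (hunit (-l3) (neg_mem_latticePoints h3))
      (hunit (-l4) (neg_mem_latticePoints h4)) ε hε0.le
      (by rw [hsum]; rw [hu]; exact hpairn l1 h1 l2 h2 hz12)
      (by rw [hsum]; rw [hu]; refine hpairn (-l3) (neg_mem_latticePoints h3) (-l4)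
            (neg_mem_latticePoints h4) (fun hq => hz34 (by
              have he : l3 + l4 = -(-l3 + -l4) := by ring
              rw [he, hq, neg_zero])))
      (by rw [hdiff]; rw [hu]; exact hpairn l1 h1 l3 h3 hz13)
      (by rw [hdiff]; rw [hu]; exact hpairn l1 h1 l4 h4 hz14)
      (by rw [hdiff]; rw [hu]; exact hpairn l2 h2 l3 h3 hz23)
      (by rw [hdiff]; rw [hu]; exact hpairn l2 h2 l4 h4 hz24)
    have hwconv : toC l1 / s + toC l2 / s - toC (-l3) / s - toC (-l4) / s
        = toC (l1 + l2 + l3 + l4) / s := by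
      rw [toC_neg, toC_neg, toC_add, toC_add, toC_add]
      field_simp; ring
    rw [hwconv, hu] at key
    -- key : ε^2 ≤ 800 * (inorm v / sqrt n)
    have ha2 : ((n:ℝ) ^ (δ - 1/4)) ^ 2 = (n:ℝ) ^ (2*δ - 1/2) := by
      rw [← Real.rpow_natCast ((n:ℝ) ^ (δ - 1/4)) 2, ← Real.rpow_mul hx0.le]
      rw [show ((δ - 1/4) * ((2:ℕ):ℝ) : ℝ) = 2*δ - 1/2 by push_cast; ring]
    have hE2 : ε ^ 2 * Real.sqrt n = c ^ 2 * (n : ℝ) ^ (2 * δ) := by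
      rw [hε, hsqr, mul_pow, ha2, mul_assoc, ← Real.rpow_add hx0,
        show (2*δ - 1/2 + 1/2 : ℝ) = 2*δ by ring]
    have hfin : ε ^ 2 * Real.sqrt n ≤ 800 * inorm (l1 + l2 + l3 + l4) := by
      have := mul_le_mul_of_nonneg_right key hsq0.le
      rw [mul_assoc, div_mul_cancel₀ _ hsq0.ne'] at this
      linarith
    rw [hE2] at hfin
    linarith

lemma Xcard (m : ℕ) (hm : 1 ≤ m) :
    ((Finset.range m).filter (fun x => m ∣ x^2+1)).card ≤ 2 * m.divisors.card^2 := by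
  classical
  set X := (Finset.range m).filter (fun x => m ∣ x^2+1) with hX
  rcases Finset.eq_empty_or_nonempty X with he | ⟨x0, hx0⟩
  · rw [he]; simp
  have hx0r : x0 < m := Finset.mem_range.mp (Finset.mem_filter.mp hx0).1
  have hx0d : m ∣ x0^2 + 1 := (Finset.mem_filter.mp hx0).2
  have hcop : Nat.gcd m x0 = 1 := by
    have h1 : Nat.gcd m x0 ∣ x0^2 + 1 := dvd_trans (Nat.gcd_dvd_left _ _) hx0d
    have h2 : Nat.gcd m x0 ∣ x0^2 := dvd_pow (Nat.gcd_dvd_right _ _) (by norm_num)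
    have := Nat.dvd_sub h1 h2
    simpa using this
  set f : ℕ → ℕ × ℕ := fun x => (Nat.gcd m (x + m - x0), Nat.gcd m (x + x0)) with hf
  -- membership facts for x ∈ X
  have hmem : ∀ x ∈ X, x < m ∧ m ∣ x^2 + 1 := by
    intro x hx
    exact ⟨Finset.mem_range.mp (Finset.mem_filter.mp hx).1, (Finset.mem_filter.mp hx).2⟩
  have hcast : ∀ x : ℕ, ((x + m - x0 : ℕ) : ℤ) = (x : ℤ) + m - x0 := by
    intro x
    have : x0 ≤ x + m := le_trans hx0r.le (Nat.le_add_left m x)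
    push_cast [Nat.cast_sub this]
    ring
  have hprod : ∀ x ∈ X, m ∣ (x + m - x0) * (x + x0) := by
    intro x hx
    have hd := (hmem x hx).2
    have : (m:ℤ) ∣ ((x + m - x0 : ℕ) : ℤ) * ((x + x0 : ℕ) : ℤ) := by
      rw [hcast]
      have e : ((x:ℤ) + m - x0) * ((x + x0 : ℕ) : ℤ)
          = ((x:ℤ)^2 + 1) - ((x0:ℤ)^2 + 1) + m * (x + x0) := by push_cast; ring
      rw [e]
      have d1 : (m:ℤ) ∣ (x:ℤ)^2 + 1 := by exact_mod_cast Int.natCast_dvd_natCast.mpr hd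
      have d2 : (m:ℤ) ∣ (x0:ℤ)^2 + 1 := by exact_mod_cast Int.natCast_dvd_natCast.mpr hx0d
      exact dvd_add (dvd_sub d1 d2) ⟨(x:ℤ) + x0, rfl⟩
    exact_mod_cast this
  -- m divides g * h
  have hgh : ∀ x ∈ X, m ∣ (f x).1 * (f x).2 := by
    intro x hx
    have h1 : Nat.gcd m ((x + m - x0) * (x + x0)) = m := Nat.gcd_eq_left (hprod x hx)
    calc m = Nat.gcd m ((x + m - x0) * (x + x0)) := h1.symm
      _ ∣ Nat.gcd m (x + m - x0) * Nat.gcd m (x + x0) := gcd_mul_dvd_mul_gcd _ _ _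
  -- pairwise distance bound within fibers
  have hfar : ∀ x ∈ X, ∀ y ∈ X, f x = f y → x ≠ y → (m:ℤ) ≤ 2 * |(x:ℤ) - y| := by
    intro x hx y hy hfxy hne
    set g := (f x).1 with hg
    set h := (f x).2 with hh
    have hg0 : 0 < g := Nat.gcd_pos_of_pos_left _ hm
    have hh0 : 0 < h := Nat.gcd_pos_of_pos_left _ hm
    have hgx : (g:ℤ) ∣ (x:ℤ) + m - x0 := by
      have := Nat.gcd_dvd_right m (x + m - x0)
      rw [← hcast]; exact_mod_cast this
    have hgy : (g:ℤ) ∣ (y:ℤ) + m - x0 := by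
      have h' : (f y).1 ∣ y + m - x0 := Nat.gcd_dvd_right m (y + m - x0)
      rw [← hfxy] at h'
      have := h'
      rw [← hcast]; exact_mod_cast this
    have hhx : (h:ℤ) ∣ (x:ℤ) + x0 := by
      have := Nat.gcd_dvd_right m (x + x0)
      exact_mod_cast this
    have hhy : (h:ℤ) ∣ (y:ℤ) + x0 := by
      have h' : (f y).2 ∣ y + x0 := Nat.gcd_dvd_right m (y + x0)
      rw [← hfxy] at h'
      exact_mod_cast h'
    have hgd : (g:ℤ) ∣ (x:ℤ) - y := by
      have := dvd_sub hgx hgy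
      have e : (x:ℤ) + m - x0 - ((y:ℤ) + m - x0) = (x:ℤ) - y := by ring
      rwa [e] at this
    have hhd : (h:ℤ) ∣ (x:ℤ) - y := by
      have := dvd_sub hhx hhy
      have e : (x:ℤ) + x0 - ((y:ℤ) + x0) = (x:ℤ) - y := by ring
      rwa [e] at this
    set D := ((x:ℤ) - y).natAbs with hD
    have hgD : g ∣ D := by
      rw [hD, ← Int.natAbs_natCast g]
      exact Int.natAbs_dvd_natAbs.mpr hgd
    have hhD : h ∣ D := by
      rw [hD, ← Int.natAbs_natCast h]
      exact Int.natAbs_dvd_natAbs.mpr hhd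
    have hlcmD : Nat.lcm g h ∣ D := Nat.lcm_dvd hgD hhD
    have hD0 : D ≠ 0 := by
      simp only [hD, ne_eq, Int.natAbs_eq_zero, sub_eq_zero]
      exact_mod_cast fun hc => hne (by exact_mod_cast hc)
    have hDlcm : Nat.lcm g h ≤ D := Nat.le_of_dvd (Nat.pos_of_ne_zero hD0) hlcmD
    -- gcd g h divides 2
    have hd2 : Nat.gcd g h ∣ 2 := by
      set d := Nat.gcd g h with hdd
      have hdm : d ∣ m := dvd_trans (Nat.gcd_dvd_left g h) (Nat.gcd_dvd_left m _)
      have hdx0 : (d:ℤ) ∣ 2 * x0 := by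
        have d1 : (d:ℤ) ∣ (x:ℤ) + m - x0 := dvd_trans (by exact_mod_cast Nat.gcd_dvd_left g h) hgx
        have d2 : (d:ℤ) ∣ (x:ℤ) + x0 := dvd_trans (by exact_mod_cast Nat.gcd_dvd_right g h) hhx
        have d3 : (d:ℤ) ∣ (m:ℤ) := Int.natCast_dvd_natCast.mpr hdm
        have e : 2 * (x0:ℤ) = ((x:ℤ) + x0) - ((x:ℤ) + m - x0) + m := by ring
        rw [e]
        exact dvd_add (dvd_sub d2 d1) d3
      have hdx0' : d ∣ 2 * x0 := by exact_mod_cast hdx0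
      have : d ∣ Nat.gcd m (2 * x0) := Nat.dvd_gcd hdm hdx0'
      calc d ∣ Nat.gcd m (2 * x0) := this
        _ ∣ Nat.gcd m 2 * Nat.gcd m x0 := gcd_mul_dvd_mul_gcd _ _ _
        _ = Nat.gcd m 2 := by rw [hcop, mul_one]
        _ ∣ 2 := Nat.gcd_dvd_right _ _
    have hmgh : m ≤ g * h := Nat.le_of_dvd (by positivity) (hgh x hx)
    have hglcm : g * h = Nat.gcd g h * Nat.lcm g h := (Nat.gcd_mul_lcm g h).symm
    have hgcd_le : Nat.gcd g h ≤ 2 := Nat.le_of_dvd (by norm_num) hd2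
    have h2lcm : m ≤ 2 * Nat.lcm g h := by
      have : g * h ≤ 2 * Nat.lcm g h := by
        rw [hglcm]
        exact Nat.mul_le_mul_right _ hgcd_le
      omega
    have : m ≤ 2 * D := by omega
    have h2 : (m:ℤ) ≤ 2 * (D:ℤ) := by exact_mod_cast this
    rwa [hD, Int.natCast_natAbs] at h2
  -- fibers have at most 2 elements
  have hfiber : ∀ b ∈ X.image f, (X.filter (fun a => f a = b)).card ≤ 2 := by
    intro b _
    by_contra hcon
    push_neg at hcon
    obtain ⟨a, ha, bb, hb, cc, hc, hab, hac, hbc⟩ := Finset.two_lt_card.mp hcon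
    have haX := Finset.mem_filter.mp ha
    have hbX := Finset.mem_filter.mp hb
    have hcX := Finset.mem_filter.mp hc
    have fab : f a = f bb := by rw [haX.2, hbX.2]
    have fac : f a = f cc := by rw [haX.2, hcX.2]
    have fbc : f bb = f cc := by rw [hbX.2, hcX.2]
    have d1 := hfar a haX.1 bb hbX.1 fab hab
    have d2 := hfar a haX.1 cc hcX.1 fac hac
    have d3 := hfar bb hbX.1 cc hcX.1 fbc hbc
    have ra : a < m := (hmem a haX.1).1
    have rb : bb < m := (hmem bb hbX.1).1
    have rc : cc < m := (hmem cc hcX.1).1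
    have ha' : (a:ℤ) < m := by exact_mod_cast ra
    have hb' : (bb:ℤ) < m := by exact_mod_cast rb
    have hc' : (cc:ℤ) < m := by exact_mod_cast rc
    have ha0 : (0:ℤ) ≤ a := Int.natCast_nonneg a
    have hb0 : (0:ℤ) ≤ bb := Int.natCast_nonneg bb
    have hc0 : (0:ℤ) ≤ cc := Int.natCast_nonneg cc
    rcases abs_cases ((a:ℤ) - bb) with ⟨e1, _⟩ | ⟨e1, _⟩ <;>
      rcases abs_cases ((a:ℤ) - cc) with ⟨e2, _⟩ | ⟨e2, _⟩ <;>
      rcases abs_cases ((bb:ℤ) - cc) with ⟨e3, _⟩ | ⟨e3, _⟩ <;>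
      rw [e1] at d1 <;> rw [e2] at d2 <;> rw [e3] at d3 <;> omega
  have himg : X.image f ⊆ m.divisors ×ˢ m.divisors := by
    intro b hb
    obtain ⟨x, hx, hfx⟩ := Finset.mem_image.mp hb
    rw [← hfx]
    rw [Finset.mem_product]
    constructor <;> rw [Nat.mem_divisors] <;>
      exact ⟨Nat.gcd_dvd_left _ _, by omega⟩
  calc X.card ≤ 2 * (X.image f).card := Finset.card_le_mul_card_image X 2 hfiber
    _ ≤ 2 * (m.divisors ×ˢ m.divisors).card := by
        exact Nat.mul_le_mul_left 2 (Finset.card_le_card himg)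
    _ = 2 * m.divisors.card^2 := by rw [Finset.card_product]; ring

def gPart (l : ℤ × ℤ) : ℕ := Int.gcd l.1 l.2

def Phi (n : ℕ) (l : ℤ × ℤ) : ℕ × ℕ :=
  (gPart l, (((l.1 / gPart l : ℤ) : ZMod (n / gPart l ^ 2)) *
    ((l.2 / gPart l : ℤ) : ZMod (n / gPart l ^ 2))⁻¹).val)

lemma Phi_snd (n : ℕ) (l : ℤ × ℤ) : (Phi n l).2 =
    ((((l.1 / gPart l : ℤ) : ZMod (n / gPart l ^ 2)) *
      ((l.2 / gPart l : ℤ) : ZMod (n / gPart l ^ 2))⁻¹).val) := rfl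

structure Decomp (n : ℕ) (l : ℤ × ℤ) : Prop where
  hg : 0 < gPart l
  h1 : l.1 = (gPart l : ℤ) * (l.1 / gPart l)
  h2 : l.2 = (gPart l : ℤ) * (l.2 / gPart l)
  hm : (l.1 / gPart l) ^ 2 + (l.2 / gPart l) ^ 2 = ((n / gPart l ^ 2 : ℕ) : ℤ)
  hm1 : 1 ≤ n / gPart l ^ 2
  hco : Int.gcd (l.1 / gPart l) (l.2 / gPart l) = 1
  hdvd : gPart l ^ 2 ∣ n

lemma decomp {n : ℕ} (hn : 1 ≤ n) {l : ℤ × ℤ} (hl : l ∈ latticePoints n) : Decomp n l := by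
  have hsq := mem_latticePoints.mp hl
  have hne := ne_zero_of_mem hn hl
  have hg : 0 < gPart l := by
    rw [gPart, Int.gcd_pos_iff]
    by_contra hc
    push_neg at hc
    exact hne (Prod.ext hc.1 hc.2)
  set g := gPart l with hgd
  set A := l.1 / (g : ℤ) with hA
  set B := l.2 / (g : ℤ) with hB
  have h1 : l.1 = (g : ℤ) * A := by
    rw [hA, mul_comm]; exact (Int.ediv_mul_cancel (Int.gcd_dvd_left _ _)).symm
  have h2 : l.2 = (g : ℤ) * B := by
    rw [hB, mul_comm]; exact (Int.ediv_mul_cancel (Int.gcd_dvd_right _ _)).symm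
  have hkey : ((g : ℤ))^2 * (A ^ 2 + B ^ 2) = (n : ℤ) := by
    rw [← hsq, h1, h2]; ring
  have hdvd : g ^ 2 ∣ n := by
    have hz : ((g ^ 2 : ℕ) : ℤ) ∣ (n : ℤ) := ⟨A ^ 2 + B ^ 2, by push_cast; rw [← hkey]⟩
    exact_mod_cast hz
  have hgm : g ^ 2 * (n / g ^ 2) = n := Nat.mul_div_cancel' hdvd
  have hm : A ^ 2 + B ^ 2 = ((n / g ^ 2 : ℕ) : ℤ) := by
    have hz : ((g : ℤ))^2 * (A ^ 2 + B ^ 2) = ((g : ℤ))^2 * ((n / g ^ 2 : ℕ) : ℤ) := by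
      rw [hkey]
      exact_mod_cast hgm.symm
    have hgz : ((g : ℤ))^2 ≠ 0 := by positivity
    exact mul_left_cancel₀ hgz hz
  have hm1 : 1 ≤ n / g ^ 2 := by
    rcases Nat.eq_zero_or_pos (n / g ^ 2) with h0 | h
    · rw [h0, mul_zero] at hgm; omega
    · exact h
  have hco : Int.gcd A B = 1 := Int.gcd_div_gcd_div_gcd hg
  exact ⟨hg, h1, h2, hm, hm1, hco, hdvd⟩

lemma unit_b {n : ℕ} (hn : 1 ≤ n) {l : ℤ × ℤ} (hl : l ∈ latticePoints n) :
    IsUnit (((l.2 / gPart l : ℤ) : ZMod (n / gPart l ^ 2))) := by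
  obtain ⟨hg, h1, h2, hm, hm1, hco, hdvd⟩ := decomp hn hl
  set a' := l.1 / (gPart l : ℤ)
  set b' := l.2 / (gPart l : ℤ)
  set m := n / gPart l ^ 2
  have hcoab : IsCoprime a' b' := Int.isCoprime_iff_gcd_eq_one.mpr hco
  have hco2 : IsCoprime b' (a' ^ 2) := hcoab.symm.pow_right
  have hco3 : IsCoprime b' (a' ^ 2 + b' * b') := hco2.add_mul_left_right b'
  have hco4 : IsCoprime b' ((m : ℤ)) := by
    rwa [show a' ^ 2 + b' * b' = a' ^ 2 + b' ^ 2 by ring, hm] at hco3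
  obtain ⟨u, v, huv⟩ := hco4
  apply IsUnit.of_mul_eq_one ((u : ZMod m))
  have := congrArg (fun t : ℤ => (t : ZMod m)) huv
  push_cast at this
  rwa [ZMod.natCast_self, mul_zero, add_zero, mul_comm] at this

lemma x_mul_b {n : ℕ} (hn : 1 ≤ n) {l : ℤ × ℤ} (hl : l ∈ latticePoints n) :
    (((l.1 / gPart l : ℤ) : ZMod (n / gPart l ^ 2)) *
      ((l.2 / gPart l : ℤ) : ZMod (n / gPart l ^ 2))⁻¹) *
      ((l.2 / gPart l : ℤ) : ZMod (n / gPart l ^ 2))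
      = ((l.1 / gPart l : ℤ) : ZMod (n / gPart l ^ 2)) := by
  rw [mul_assoc, ZMod.inv_mul_of_unit _ (unit_b hn hl), mul_one]

lemma x_sq {n : ℕ} (hn : 1 ≤ n) {l : ℤ × ℤ} (hl : l ∈ latticePoints n) :
    (((l.1 / gPart l : ℤ) : ZMod (n / gPart l ^ 2)) *
      ((l.2 / gPart l : ℤ) : ZMod (n / gPart l ^ 2))⁻¹) ^ 2 = -1 := by
  obtain ⟨hg, h1, h2, hm, hm1, hco, hdvd⟩ := decomp hn hl
  set m := n / gPart l ^ 2
  set ac := ((l.1 / gPart l : ℤ) : ZMod m) with hac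
  set bc := ((l.2 / gPart l : ℤ) : ZMod m) with hbc
  set x := ac * bc⁻¹ with hx
  have hsum0 : ac ^ 2 + bc ^ 2 = 0 := by
    have := congrArg (fun t : ℤ => (t : ZMod m)) hm
    push_cast at this
    rwa [ZMod.natCast_self] at this
  have hxb : x * bc = ac := x_mul_b hn hl
  have hb2 : IsUnit (bc ^ 2) := (unit_b hn hl).pow 2
  apply hb2.mul_right_cancel
  calc x ^ 2 * bc ^ 2 = (x * bc) ^ 2 := by ring
    _ = ac ^ 2 := by rw [hxb]
    _ = -1 * bc ^ 2 := by linear_combination hsum0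

lemma phi_root {n : ℕ} (hn : 1 ≤ n) {l : ℤ × ℤ} (hl : l ∈ latticePoints n) :
    (Phi n l).2 < n / gPart l ^ 2 ∧ (n / gPart l ^ 2) ∣ (Phi n l).2 ^ 2 + 1 := by
  obtain ⟨hg, h1, h2, hm, hm1, hco, hdvd⟩ := decomp hn hl
  haveI : NeZero (n / gPart l ^ 2) := ⟨by omega⟩
  set m := n / gPart l ^ 2 with hmd
  rw [Phi_snd]
  set x := (((l.1 / gPart l : ℤ) : ZMod m) * ((l.2 / gPart l : ℤ) : ZMod m)⁻¹) with hxd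
  refine ⟨ZMod.val_lt _, ?_⟩
  rw [← ZMod.natCast_eq_zero_iff (x.val ^ 2 + 1) m]
  push_cast
  have hv : ((x.val : ℕ) : ZMod m) = x := (ZMod.natCast_val x).trans (ZMod.cast_id _ _)
  rw [hv]
  have := x_sq hn hl
  rw [← hxd] at this
  rw [this]
  ring

lemma circle_int {C E : ℤ} (h : C ^ 2 + E ^ 2 = 1) :
    (C = 1 ∧ E = 0) ∨ (C = -1 ∧ E = 0) ∨ (C = 0 ∧ E = 1) ∨ (C = 0 ∧ E = -1) := by
  have hc1 : -1 ≤ C := by nlinarith [sq_nonneg E]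
  have hc2 : C ≤ 1 := by nlinarith [sq_nonneg E]
  have hC3 : C = -1 ∨ C = 0 ∨ C = 1 := by omega
  rcases hC3 with rfl | rfl | rfl
  · have hE2 : E ^ 2 = 0 := by linarith
    exact Or.inr (Or.inl ⟨rfl, sq_eq_zero_iff.mp hE2⟩)
  · have hE2 : (E - 1) * (E + 1) = 0 := by linear_combination h
    rcases mul_eq_zero.mp hE2 with h' | h'
    · exact Or.inr (Or.inr (Or.inl ⟨rfl, by linarith⟩))
    · exact Or.inr (Or.inr (Or.inr ⟨rfl, by linarith⟩))
  · have hE2 : E ^ 2 = 0 := by linarith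
    exact Or.inl ⟨rfl, sq_eq_zero_iff.mp hE2⟩

lemma fiber_key {n : ℕ} (hn : 1 ≤ n) {l l' : ℤ × ℤ} (hl : l ∈ latticePoints n)
    (hl' : l' ∈ latticePoints n) (hP : Phi n l' = Phi n l) :
    l' = l ∨ l' = -l ∨ l' = (-l.2, l.1) ∨ l' = (l.2, -l.1) := by
  obtain ⟨hg, h1, h2, hm, hm1, hco, hdvd⟩ := decomp hn hl
  obtain ⟨hg', h1', h2', hm', hm1', hco', hdvd'⟩ := decomp hn hl'
  have hgg : gPart l' = gPart l := congrArg Prod.fst hP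
  set g := gPart l with hgdef
  set m := n / g ^ 2 with hmdef
  haveI : NeZero m := ⟨by omega⟩
  rw [hgg] at h1' h2' hm' hm1'
  set a1 := l.1 / (g : ℤ) with ha1d
  set b1 := l.2 / (g : ℤ) with hb1d
  set a2 := l'.1 / (g : ℤ) with ha2d
  set b2 := l'.2 / (g : ℤ) with hb2d
  rw [Phi, Phi, hgg] at hP
  have hval := congrArg Prod.snd hP
  simp only at hval
  have hxeq : (((l'.1 / g : ℤ) : ZMod m) * ((l'.2 / g : ℤ) : ZMod m)⁻¹)
      = (((l.1 / g : ℤ) : ZMod m) * ((l.2 / g : ℤ) : ZMod m)⁻¹) :=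
    ZMod.val_injective m hval
  set x := (((l.1 / g : ℤ) : ZMod m) * ((l.2 / g : ℤ) : ZMod m)⁻¹) with hxd
  have hxb1 : x * ((b1 : ℤ) : ZMod m) = ((a1 : ℤ) : ZMod m) := x_mul_b hn hl
  have hxb2 : x * ((b2 : ℤ) : ZMod m) = ((a2 : ℤ) : ZMod m) := by
    have h' := x_mul_b hn hl'
    rw [hgg] at h'
    rw [← hxeq]
    exact h'
  have hx2 : x ^ 2 = -1 := x_sq hn hl
  have zero1 : ((a1 * b2 - a2 * b1 : ℤ) : ZMod m) = 0 := by
    push_cast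
    rw [← hxb1, ← hxb2]
    ring
  have zero2 : ((a1 * a2 + b1 * b2 : ℤ) : ZMod m) = 0 := by
    push_cast
    rw [← hxb1, ← hxb2]
    have e : x * ((b1 : ℤ) : ZMod m) * (x * ((b2 : ℤ) : ZMod m))
        + ((b1 : ℤ) : ZMod m) * ((b2 : ℤ) : ZMod m)
        = (x ^ 2 + 1) * (((b1 : ℤ) : ZMod m) * ((b2 : ℤ) : ZMod m)) := by ring
    rw [e, hx2]
    ring
  obtain ⟨E, hE⟩ := (ZMod.intCast_zmod_eq_zero_iff_dvd _ m).mp zero1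
  obtain ⟨C, hC⟩ := (ZMod.intCast_zmod_eq_zero_iff_dvd _ m).mp zero2
  have hm0 : ((m : ℕ) : ℤ) ≠ 0 := Int.natCast_ne_zero.mpr (by omega)
  have hbr : ((m:ℤ) * C) ^ 2 + ((m:ℤ) * E) ^ 2 = (m:ℤ) * (m:ℤ) := by
    rw [← hC, ← hE]
    calc (a1 * a2 + b1 * b2) ^ 2 + (a1 * b2 - a2 * b1) ^ 2
        = (a1 ^ 2 + b1 ^ 2) * (a2 ^ 2 + b2 ^ 2) := by ring
      _ = (m:ℤ) * (m:ℤ) := by rw [hm, hm']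
  have hce : C ^ 2 + E ^ 2 = 1 := by
    have h2' : (m:ℤ) * (m:ℤ) * (C ^ 2 + E ^ 2) = (m:ℤ) * (m:ℤ) * 1 := by
      linear_combination hbr
    exact mul_left_cancel₀ (mul_ne_zero hm0 hm0) h2'
  have ida : (m:ℤ) * a2 = a1 * (a1 * a2 + b1 * b2) - b1 * (a1 * b2 - a2 * b1) := by
    rw [← hm]; ring
  have idb : (m:ℤ) * b2 = b1 * (a1 * a2 + b1 * b2) + a1 * (a1 * b2 - a2 * b1) := by
    rw [← hm]; ring
  rw [hC, hE] at ida idb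
  have ha2v : a2 = a1 * C - b1 * E := by
    apply mul_left_cancel₀ hm0
    rw [ida]; ring
  have hb2v : b2 = b1 * C + a1 * E := by
    apply mul_left_cancel₀ hm0
    rw [idb]; ring
  have hfin : (a2 = a1 ∧ b2 = b1) ∨ (a2 = -a1 ∧ b2 = -b1) ∨ (a2 = -b1 ∧ b2 = a1)
      ∨ (a2 = b1 ∧ b2 = -a1) := by
    rcases circle_int hce with ⟨hc, he⟩ | ⟨hc, he⟩ | ⟨hc, he⟩ | ⟨hc, he⟩
    · exact Or.inl ⟨by rw [ha2v, hc, he]; ring, by rw [hb2v, hc, he]; ring⟩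
    · exact Or.inr (Or.inl ⟨by rw [ha2v, hc, he]; ring, by rw [hb2v, hc, he]; ring⟩)
    · exact Or.inr (Or.inr (Or.inl ⟨by rw [ha2v, hc, he]; ring, by rw [hb2v, hc, he]; ring⟩))
    · exact Or.inr (Or.inr (Or.inr ⟨by rw [ha2v, hc, he]; ring, by rw [hb2v, hc, he]; ring⟩))
  rcases hfin with ⟨e1, e2⟩ | ⟨e1, e2⟩ | ⟨e1, e2⟩ | ⟨e1, e2⟩
  · left
    apply Prod.ext
    · rw [h1', e1, ← h1]
    · rw [h2', e2, ← h2]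
  · right; left
    apply Prod.ext
    · rw [Prod.fst_neg, h1', e1, h1]; ring
    · rw [Prod.snd_neg, h2', e2, h2]; ring
  · right; right; left
    apply Prod.ext
    · show l'.1 = -l.2
      rw [h1', e1, h2]; ring
    · show l'.2 = l.1
      rw [h2', e2, ← h1]
  · right; right; right
    apply Prod.ext
    · show l'.1 = l.2
      rw [h1', e1, ← h2]
    · show l'.2 = -l.1
      rw [h2', e2, h1]; ring



lemma latCard_le (n : ℕ) (hn : 1 ≤ n) :
    (latticePoints n).card ≤ 8 * n.divisors.card ^ 3 := by
  classical
  have hfiber : ∀ b ∈ (latticePoints n).image (Phi n),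
      ((latticePoints n).filter (fun a => Phi n a = b)).card ≤ 4 := by
    intro b hb
    obtain ⟨l, hl, rfl⟩ := Finset.mem_image.mp hb
    have hsub : (latticePoints n).filter (fun a => Phi n a = Phi n l)
        ⊆ {l, -l, (-l.2, l.1), (l.2, -l.1)} := by
      intro l' h'
      obtain ⟨hl', hP⟩ := Finset.mem_filter.mp h'
      rcases fiber_key hn hl hl' hP with h | h | h | h <;>
        simp [Finset.mem_insert, h]
    refine le_trans (Finset.card_le_card hsub) ?_
    have c1 := Finset.card_insert_le l ({-l, (-l.2, l.1), (l.2, -l.1)} : Finset (ℤ × ℤ))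
    have c2 := Finset.card_insert_le (-l) ({(-l.2, l.1), (l.2, -l.1)} : Finset (ℤ × ℤ))
    have c3 := Finset.card_insert_le ((-l.2, l.1)) ({(l.2, -l.1)} : Finset (ℤ × ℤ))
    have c4 := Finset.card_singleton ((l.2, -l.1) : ℤ × ℤ)
    omega
  set T : ℕ → Finset (ℕ × ℕ) := fun g =>
    if g ^ 2 ∣ n then
      ((Finset.range (n / g ^ 2)).filter (fun x => (n / g ^ 2) ∣ x ^ 2 + 1)).image
        (fun xv => (g, xv))
    else ∅ with hT
  have himg : (latticePoints n).image (Phi n) ⊆ n.divisors.biUnion T := by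
    intro b hb
    obtain ⟨l, hl, rfl⟩ := Finset.mem_image.mp hb
    have D := decomp hn hl
    apply Finset.mem_biUnion.mpr
    refine ⟨gPart l, ?_, ?_⟩
    · rw [Nat.mem_divisors]
      exact ⟨dvd_trans (dvd_pow_self _ two_ne_zero) D.hdvd, by omega⟩
    · rw [hT]
      simp only
      rw [if_pos D.hdvd]
      apply Finset.mem_image.mpr
      refine ⟨(Phi n l).2, ?_, rfl⟩
      rw [Finset.mem_filter, Finset.mem_range]
      exact ⟨(phi_root hn hl).1, (phi_root hn hl).2⟩
  have hTcard : ∀ g ∈ n.divisors, (T g).card ≤ 2 * n.divisors.card ^ 2 := by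
    intro g hg
    rw [hT]
    simp only
    by_cases hd : g ^ 2 ∣ n
    · rw [if_pos hd]
      have hg1 : 1 ≤ g := by
        rcases Nat.mem_divisors.mp hg with ⟨hdv, hn0⟩
        rcases Nat.eq_zero_or_pos g with h0 | h
        · rw [h0] at hdv; simp at hdv; omega
        · exact h
      have hm1 : 1 ≤ n / g ^ 2 := Nat.div_pos (Nat.le_of_dvd (by omega) hd) (by positivity)
      have hmd : n / g ^ 2 ∣ n := Nat.div_dvd_of_dvd hd
      have hsubd : (n / g ^ 2).divisors ⊆ n.divisors :=
        Nat.divisors_subset_of_dvd (by omega) hmd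
      have hcard := Finset.card_le_card hsubd
      calc (((Finset.range (n / g ^ 2)).filter (fun x => (n / g ^ 2) ∣ x ^ 2 + 1)).image
            (fun xv => (g, xv))).card
          ≤ ((Finset.range (n / g ^ 2)).filter (fun x => (n / g ^ 2) ∣ x ^ 2 + 1)).card :=
            Finset.card_image_le
        _ ≤ 2 * (n / g ^ 2).divisors.card ^ 2 := Xcard _ hm1
        _ ≤ 2 * n.divisors.card ^ 2 := by
            have := Nat.pow_le_pow_left hcard 2
            omega
    · rw [if_neg hd]; simp
  calc (latticePoints n).card
      ≤ 4 * ((latticePoints n).image (Phi n)).card :=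
        Finset.card_le_mul_card_image _ 4 hfiber
    _ ≤ 4 * (n.divisors.biUnion T).card :=
        Nat.mul_le_mul_left _ (Finset.card_le_card himg)
    _ ≤ 4 * ∑ g ∈ n.divisors, (T g).card :=
        Nat.mul_le_mul_left _ Finset.card_biUnion_le
    _ ≤ 4 * ∑ _g ∈ n.divisors, 2 * n.divisors.card ^ 2 :=
        Nat.mul_le_mul_left _ (Finset.sum_le_sum hTcard)
    _ = 8 * n.divisors.card ^ 3 := by
        rw [Finset.sum_const, smul_eq_mul]
        ring

lemma divisor_bound (ε : ℝ) (hε : 0 < ε) :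
    ∃ C > 0, ∀ n : ℕ, 1 ≤ n → (n.divisors.card : ℝ) ≤ C * (n : ℝ) ^ ε := by
  have hlog2 : 0 < Real.log 2 := Real.log_pos (by norm_num)
  set B : ℝ := 1 + 1 / (ε * Real.log 2) with hB
  have hB1 : 1 ≤ B := by
    rw [hB]
    have : 0 < 1 / (ε * Real.log 2) := by positivity
    linarith
  have hBe : 1 ≤ B * (ε * Real.log 2) := by
    rw [hB]
    have h0 : ε * Real.log 2 ≠ 0 := by positivity
    field_simp
    nlinarith
  set P : ℕ := ⌈(2:ℝ) ^ (1/ε)⌉₊ with hP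
  have hkey : ∀ e : ℕ, ((e:ℝ) + 1) ≤ B * (2:ℝ) ^ (ε * e) := by
    intro e
    have h2 : (2:ℝ) ^ (ε * e) = Real.exp (ε * e * Real.log 2) := by
      rw [Real.rpow_def_of_pos (by norm_num)]
      ring_nf
    have hexp := Real.add_one_le_exp (ε * e * Real.log 2)
    rw [h2]
    have he0 : (0:ℝ) ≤ e := Nat.cast_nonneg e
    nlinarith [mul_nonneg (mul_nonneg hε.le he0) hlog2.le]
  have hsmall : ∀ p e : ℕ, 2 ≤ p → ((e:ℝ) + 1) ≤ B * (p:ℝ) ^ (ε * e) := by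
    intro p e hp
    refine le_trans (hkey e) ?_
    have : (2:ℝ) ^ (ε * e) ≤ (p:ℝ) ^ (ε * e) :=
      Real.rpow_le_rpow (by norm_num) (by exact_mod_cast hp) (by positivity)
    nlinarith [Real.rpow_nonneg (by norm_num : (0:ℝ) ≤ 2) (ε * e)]
  have hbig : ∀ p e : ℕ, P ≤ p → ((e:ℝ) + 1) ≤ (p:ℝ) ^ (ε * e) := by
    intro p e hp
    have hpr : (2:ℝ) ^ (1/ε) ≤ (p:ℝ) := by
      refine le_trans (Nat.le_ceil _) ?_
      exact_mod_cast hp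
    have h2p : (2:ℝ) ≤ (p:ℝ) ^ ε := by
      have h1 : ((2:ℝ) ^ (1/ε)) ^ ε ≤ (p:ℝ) ^ ε :=
        Real.rpow_le_rpow (by positivity) hpr hε.le
      rwa [← Real.rpow_mul (by norm_num : (0:ℝ) ≤ 2), one_div,
        inv_mul_cancel₀ hε.ne', Real.rpow_one] at h1
    have hnat : ((e:ℝ) + 1) ≤ (2:ℝ) ^ e := by
      have := Nat.lt_two_pow_self (n := e)
      have h2 : (e + 1 : ℕ) ≤ 2 ^ e := this
      exact_mod_cast h2
    calc ((e:ℝ) + 1) ≤ (2:ℝ) ^ e := hnat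
      _ ≤ ((p:ℝ) ^ ε) ^ e := pow_le_pow_left₀ (by norm_num) h2p e
      _ = (p:ℝ) ^ (ε * e) := by
          rw [← Real.rpow_natCast ((p:ℝ) ^ ε) e, ← Real.rpow_mul (Nat.cast_nonneg p)]
  refine ⟨B ^ P, by positivity, ?_⟩
  intro n hn
  have hn0 : n ≠ 0 := by omega
  rw [Nat.card_divisors hn0]
  set S := n.primeFactors with hS
  have hcast : ((∏ p ∈ S, (n.factorization p + 1) : ℕ) : ℝ)
      = ∏ p ∈ S, ((n.factorization p : ℝ) + 1) := by
    push_cast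
    rfl
  rw [hcast]
  have step1 : ∏ p ∈ S, ((n.factorization p : ℝ) + 1)
      ≤ ∏ p ∈ S, ((if p < P then B else 1) * (p:ℝ) ^ (ε * n.factorization p)) := by
    apply Finset.prod_le_prod
    · intro p _; positivity
    · intro p hp
      have hp2 : 2 ≤ p := (Nat.prime_of_mem_primeFactors hp).two_le
      by_cases hc : p < P
      · rw [if_pos hc]; exact hsmall p _ hp2
      · rw [if_neg hc]; rw [one_mul]; exact hbig p _ (by omega)
  have step2 : ∏ p ∈ S, ((if p < P then B else 1) * (p:ℝ) ^ (ε * n.factorization p))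
      = (∏ p ∈ S, (if p < P then B else 1)) * ∏ p ∈ S, (p:ℝ) ^ (ε * n.factorization p) :=
    Finset.prod_mul_distrib
  have step3 : (∏ p ∈ S, (if p < P then B else 1)) ≤ B ^ P := by
    rw [Finset.prod_ite, Finset.prod_const, Finset.prod_const, one_pow, mul_one]
    have hsub : S.filter (fun p => p < P) ⊆ Finset.range P := by
      intro p hp
      rw [Finset.mem_range]
      exact (Finset.mem_filter.mp hp).2
    have hcard : (S.filter (fun p => p < P)).card ≤ P := by
      have := Finset.card_le_card hsub
      simpa using this
    exact pow_le_pow_right₀ hB1 hcard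
  have step4 : ∏ p ∈ S, (p:ℝ) ^ (ε * n.factorization p) = (n:ℝ) ^ ε := by
    have e1 : ∀ p ∈ S, (p:ℝ) ^ (ε * n.factorization p)
        = (((p ^ n.factorization p : ℕ) : ℝ)) ^ ε := by
      intro p hp
      rw [mul_comm, Real.rpow_mul (Nat.cast_nonneg p), Real.rpow_natCast]
      push_cast
      rfl
    rw [Finset.prod_congr rfl e1, Real.finset_prod_rpow S _ (fun p _ => by positivity) ε]
    congr 1
    rw [← Nat.cast_prod]
    have hprod : ∏ p ∈ S, p ^ n.factorization p = n := by
      rw [hS, ← Nat.support_factorization]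
      exact Nat.factorization_prod_pow_eq_self hn0
    rw [hprod]
  calc ∏ p ∈ S, ((n.factorization p : ℝ) + 1)
      ≤ _ := step1
    _ = _ := step2
    _ ≤ B ^ P * (n:ℝ) ^ ε := by
        rw [step4]
        have : (0:ℝ) ≤ (n:ℝ) ^ ε := by positivity
        nlinarith [step3]

lemma inorm_nonneg (l : ℤ × ℤ) : 0 ≤ inorm l := Real.sqrt_nonneg _

/-- Lemma B.1: lower bound for nonzero sums of four lattice
points, for `δ`-separated sequences. -/
theorem four_lattice_points_sum_lower_bound
    (δ : ℝ) (hδ : 0 < δ) (n : ℕ → ℕ) (hnS : ∀ k, n k ∈ sumTwoSquares)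
    (hninf : Tendsto n atTop atTop) (hsep : IsDeltaSep δ n) :
    (∃ C > 0, ∀ k, ∀ l1 ∈ latticePoints (n k), ∀ l2 ∈ latticePoints (n k),
      ∀ l3 ∈ latticePoints (n k), ∀ l4 ∈ latticePoints (n k),
        l1 + l2 + l3 + l4 ≠ 0 →
        C * (n k : ℝ) ^ (2 * δ) ≤ inorm (l1 + l2 + l3 + l4)) ∧
    Tendsto (fun k => ((latCard (n k) : ℝ) ^ 2)⁻¹ *
      ∑ l1 ∈ latticePoints (n k), ∑ l2 ∈ latticePoints (n k),
        ∑ l3 ∈ latticePoints (n k), ∑ l4 ∈ latticePoints (n k),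
          if l1 + l2 + l3 + l4 ≠ 0 then (inorm (l1 + l2 + l3 + l4))⁻¹ else 0)
      atTop (𝓝 (0 : ℝ)) := by
  classical
  obtain ⟨c, hc, hsepc⟩ := hsep
  have hex : ∀ k, ∃ l, l ∈ latticePoints (n k) := by
    intro k
    obtain ⟨a, b, hab⟩ := hnS k
    exact ⟨(a, b), mem_latticePoints.mpr hab.symm⟩
  have hzero : ∀ {m : ℕ} {l : ℤ × ℤ}, m = 0 → l ∈ latticePoints m → l = 0 := by
    intro m l hm hl
    have := mem_latticePoints.mp hl
    rw [hm] at this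
    simp only [Nat.cast_zero] at this
    have h1 : l.1 = 0 := by nlinarith [sq_nonneg l.1, sq_nonneg l.2]
    have h2 : l.2 = 0 := by nlinarith [sq_nonneg l.1, sq_nonneg l.2]
    exact Prod.ext h1 h2
  set C := c ^ 2 / 800 with hCd
  have hC : 0 < C := by positivity
  have part1 : ∀ k, ∀ l1 ∈ latticePoints (n k), ∀ l2 ∈ latticePoints (n k),
      ∀ l3 ∈ latticePoints (n k), ∀ l4 ∈ latticePoints (n k),
        l1 + l2 + l3 + l4 ≠ 0 →
        C * (n k : ℝ) ^ (2 * δ) ≤ inorm (l1 + l2 + l3 + l4) := by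
    intro k l1 h1 l2 h2 l3 h3 l4 h4 hne
    rcases Nat.eq_zero_or_pos (n k) with h0 | hpos
    · exfalso
      apply hne
      rw [hzero h0 h1, hzero h0 h2, hzero h0 h3, hzero h0 h4]
      simp
    · obtain ⟨l0, hl0⟩ := hex k
      exact part1_main δ c hc (n k) hpos l0 hl0 (hsepc k) l1 h1 l2 h2 l3 h3 l4 h4 hne
  refine ⟨⟨C, hC, part1⟩, ?_⟩
  obtain ⟨D, hD, hDb⟩ := divisor_bound (δ / 6) (by positivity)
  set K := 64 * D ^ 6 / C with hKd
  have hK : 0 < K := by positivity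
  set F := fun k => ((latCard (n k) : ℝ) ^ 2)⁻¹ *
      ∑ l1 ∈ latticePoints (n k), ∑ l2 ∈ latticePoints (n k),
        ∑ l3 ∈ latticePoints (n k), ∑ l4 ∈ latticePoints (n k),
          if l1 + l2 + l3 + l4 ≠ 0 then (inorm (l1 + l2 + l3 + l4))⁻¹ else 0 with hF
  have hF_nonneg : ∀ k, 0 ≤ F k := by
    intro k
    apply mul_nonneg (by positivity)
    apply Finset.sum_nonneg; intro l1 _
    apply Finset.sum_nonneg; intro l2 _
    apply Finset.sum_nonneg; intro l3 _
    apply Finset.sum_nonneg; intro l4 _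
    split
    · exact inv_nonneg.mpr (inorm_nonneg _)
    · exact le_rfl
  have hF_le : ∀ k, 1 ≤ n k → F k ≤ K * ((n k : ℕ) : ℝ) ^ (-δ) := by
    intro k hk
    set x := ((n k : ℕ) : ℝ) with hx
    have hx1 : (1:ℝ) ≤ x := by rw [hx]; exact_mod_cast hk
    have hx0 : (0:ℝ) < x := by linarith
    set N := latCard (n k) with hN
    have hN1 : 1 ≤ N := by
      obtain ⟨l, hl⟩ := hex k
      exact Finset.card_pos.mpr ⟨l, hl⟩
    have hNR : (1:ℝ) ≤ (N:ℝ) := by exact_mod_cast hN1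
    have hbound : (0:ℝ) < C * x ^ (2*δ) := by positivity
    have hterm : ∀ l1 ∈ latticePoints (n k), ∀ l2 ∈ latticePoints (n k),
        ∀ l3 ∈ latticePoints (n k), ∀ l4 ∈ latticePoints (n k),
        (if l1 + l2 + l3 + l4 ≠ 0 then (inorm (l1 + l2 + l3 + l4))⁻¹ else 0)
          ≤ (C * x ^ (2*δ))⁻¹ := by
      intro l1 h1 l2 h2 l3 h3 l4 h4
      split
      · next h =>
          exact inv_anti₀ hbound (part1 k l1 h1 l2 h2 l3 h3 l4 h4 h)
      · positivity
    have hsum : ∑ l1 ∈ latticePoints (n k), ∑ l2 ∈ latticePoints (n k),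
        ∑ l3 ∈ latticePoints (n k), ∑ l4 ∈ latticePoints (n k),
          (if l1 + l2 + l3 + l4 ≠ 0 then (inorm (l1 + l2 + l3 + l4))⁻¹ else 0)
        ≤ (N:ℝ)^4 * (C * x ^ (2*δ))⁻¹ := by
      have s1 : ∀ l1 ∈ latticePoints (n k), ∀ l2 ∈ latticePoints (n k),
          ∀ l3 ∈ latticePoints (n k),
          ∑ l4 ∈ latticePoints (n k),
            (if l1 + l2 + l3 + l4 ≠ 0 then (inorm (l1 + l2 + l3 + l4))⁻¹ else 0)
          ≤ (N:ℝ) * (C * x ^ (2*δ))⁻¹ := by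
        intro l1 h1 l2 h2 l3 h3
        refine le_trans (Finset.sum_le_card_nsmul _ _ _
          (fun l4 h4 => hterm l1 h1 l2 h2 l3 h3 l4 h4)) ?_
        rw [nsmul_eq_mul]
        have hNc : ((latticePoints (n k)).card : ℝ) = (N:ℝ) := rfl
        rw [hNc]
      have s2 : ∀ l1 ∈ latticePoints (n k), ∀ l2 ∈ latticePoints (n k),
          ∑ l3 ∈ latticePoints (n k), ∑ l4 ∈ latticePoints (n k),
            (if l1 + l2 + l3 + l4 ≠ 0 then (inorm (l1 + l2 + l3 + l4))⁻¹ else 0)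
          ≤ (N:ℝ)^2 * (C * x ^ (2*δ))⁻¹ := by
        intro l1 h1 l2 h2
        refine le_trans (Finset.sum_le_card_nsmul _ _ ((N:ℝ) * (C * x ^ (2*δ))⁻¹)
          (fun l3 h3 => s1 l1 h1 l2 h2 l3 h3)) ?_
        rw [nsmul_eq_mul]
        have hNc : ((latticePoints (n k)).card : ℝ) = (N:ℝ) := rfl
        rw [hNc]
        exact le_of_eq (by ring)
      have s3 : ∀ l1 ∈ latticePoints (n k),
          ∑ l2 ∈ latticePoints (n k), ∑ l3 ∈ latticePoints (n k),
            ∑ l4 ∈ latticePoints (n k),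
            (if l1 + l2 + l3 + l4 ≠ 0 then (inorm (l1 + l2 + l3 + l4))⁻¹ else 0)
          ≤ (N:ℝ)^3 * (C * x ^ (2*δ))⁻¹ := by
        intro l1 h1
        refine le_trans (Finset.sum_le_card_nsmul _ _ ((N:ℝ)^2 * (C * x ^ (2*δ))⁻¹)
          (fun l2 h2 => s2 l1 h1 l2 h2)) ?_
        rw [nsmul_eq_mul]
        have hNc : ((latticePoints (n k)).card : ℝ) = (N:ℝ) := rfl
        rw [hNc]
        exact le_of_eq (by ring)
      refine le_trans (Finset.sum_le_card_nsmul _ _ ((N:ℝ)^3 * (C * x ^ (2*δ))⁻¹)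
        (fun l1 h1 => s3 l1 h1)) ?_
      rw [nsmul_eq_mul]
      have hNc : ((latticePoints (n k)).card : ℝ) = (N:ℝ) := rfl
      rw [hNc]
      exact le_of_eq (by ring)
    -- bound N by divisors
    have hNle : (N:ℝ) ≤ 8 * D^3 * x ^ (δ/2) := by
      have h1 : (N:ℝ) ≤ 8 * ((n k).divisors.card : ℝ)^3 := by
        have := latCard_le (n k) hk
        exact_mod_cast this
      have h2 : ((n k).divisors.card : ℝ) ≤ D * x ^ (δ/6) := hDb (n k) hk
      have h3 : ((n k).divisors.card : ℝ)^3 ≤ (D * x ^ (δ/6))^3 :=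
        pow_le_pow_left₀ (Nat.cast_nonneg _) h2 3
      have h4 : (D * x ^ (δ/6))^3 = D^3 * x ^ (δ/2) := by
        rw [mul_pow, ← Real.rpow_natCast (x ^ (δ/6)) 3, ← Real.rpow_mul hx0.le,
          show (δ/6 * ((3:ℕ):ℝ)) = δ/2 by push_cast; ring]
      nlinarith
    have hN2le : (N:ℝ)^2 ≤ 64 * D^6 * x ^ δ := by
      have h5 : ((8:ℝ) * D^3 * x ^ (δ/2))^2 = 64 * D^6 * x ^ δ := by
        rw [mul_pow, mul_pow, ← Real.rpow_natCast (x ^ (δ/2)) 2, ← Real.rpow_mul hx0.le,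
          show (δ/2 * ((2:ℕ):ℝ)) = δ by push_cast; ring]
        ring
      have := pow_le_pow_left₀ (Nat.cast_nonneg N) hNle 2
      rw [h5] at this
      exact this
    -- final computation
    have hNpos : (0:ℝ) < (N:ℝ)^2 := by positivity
    calc F k ≤ ((N:ℝ)^2)⁻¹ * ((N:ℝ)^4 * (C * x ^ (2*δ))⁻¹) := by
          rw [hF]
          exact mul_le_mul_of_nonneg_left hsum (by positivity)
      _ = (N:ℝ)^2 * (C * x ^ (2*δ))⁻¹ := by
          field_simp
      _ ≤ (64 * D^6 * x ^ δ) * (C * x ^ (2*δ))⁻¹ :=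
          mul_le_mul_of_nonneg_right hN2le (by positivity)
      _ = K * x ^ (-δ) := by
          rw [hKd]
          rw [mul_inv, ← Real.rpow_neg hx0.le]
          rw [show (64 * D^6 * x ^ δ) * (C⁻¹ * x ^ (-(2*δ)))
            = (64 * D^6 / C) * (x ^ δ * x ^ (-(2*δ))) by ring]
          rw [← Real.rpow_add hx0]
          congr 1
          ring
  have hlim : Tendsto (fun k => K * ((n k : ℕ) : ℝ) ^ (-δ)) atTop (𝓝 0) := by
    have h1 : Tendsto (fun k => ((n k : ℕ) : ℝ)) atTop atTop :=
      tendsto_natCast_atTop_atTop.comp hninf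
    have h2 : Tendsto (fun k => ((n k : ℕ):ℝ) ^ (-δ)) atTop (𝓝 0) :=
      (tendsto_rpow_neg_atTop hδ).comp h1
    simpa using h2.const_mul K
  refine squeeze_zero' (Eventually.of_forall hF_nonneg) ?_ hlim
  filter_upwards [hninf.eventually_ge_atTop 1] with k hk using hF_le k hk


end
end

section
/- Let C ⊂ 𝕋 be a smooth curve with nowhere vanishing curvature. There exists a constant c₀ > 0 such that for every n ∈ S and every t₁, t₂ ∈ [0,L] with 0 < |t₁ − t₂| < c₀/√(E_n), where E_n = 4π²n, one has r_n(t₁, t₂) ≠ ±1. -/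
open MeasureTheory ProbabilityTheory Real Filter Topology
open scoped ENNReal

noncomputable section

set_option maxHeartbeats 1000000 in
/-- Lemma 5.4: on short scales the covariance function stays
away from `±1`. -/
theorem covariance_ne_one_short_range
    (γ : ℝ → ℝ × ℝ) (L : ℝ) (hL : 0 < L)
    (hsmooth : ContDiff ℝ (⊤ : ℕ∞) γ)
    (hunit : ∀ t, (deriv γ t).1 ^ 2 + (deriv γ t).2 ^ 2 = 1)
    (hcurv : ∀ t, deriv (deriv γ) t ≠ 0)
    :
    ∃ c0 > 0, ∀ n ∈ sumTwoSquares, ∀ t1 ∈ Set.Icc (0 : ℝ) L, ∀ t2 ∈ Set.Icc (0 : ℝ) L,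
      0 < |t1 - t2| → |t1 - t2| < c0 / Real.sqrt (4 * π ^ 2 * n) →
      covr γ n t1 t2 ≠ 1 ∧ covr γ n t1 t2 ≠ -1 := by
  classical
  have hdiff : Differentiable ℝ γ := hsmooth.differentiable (by simp)
  have hsmooth' : ContDiff ℝ (⊤ : ℕ∞) (deriv γ) := (contDiff_infty_iff_deriv.mp hsmooth).2
  have hdiff' : Differentiable ℝ (deriv γ) := hsmooth'.differentiable (by simp)
  have hcont2 : Continuous (deriv (deriv γ)) := (contDiff_infty_iff_deriv.mp hsmooth').2.continuous
  obtain ⟨K₀, hK₀⟩ := (isCompact_Icc (a := (0:ℝ)) (b := L)).exists_bound_of_continuousOn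
    hcont2.continuousOn
  set K : ℝ := max K₀ 1 with hKdef
  have hK1 : (1:ℝ) ≤ K := le_max_right _ _
  have hKpos : (0:ℝ) < K := lt_of_lt_of_le one_pos hK1
  have hKb : ∀ s ∈ Set.Icc (0:ℝ) L, ‖deriv (deriv γ) s‖ ≤ K :=
    fun s hs => (hK₀ s hs).trans (le_max_left _ _)
  clear_value K
  refine ⟨min 1 (1/K), lt_min one_pos (by positivity), ?_⟩
  intro n hn t1 ht1 t2 ht2 hpos hlt
  set c0 : ℝ := min 1 (1/K) with hc0def
  have hc0le1 : c0 ≤ 1 := min_le_left _ _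
  have hc0leK : c0 ≤ 1/K := min_le_right _ _
  clear_value c0
  rcases Nat.eq_zero_or_pos n with hn0 | hn1
  · exfalso
    rw [hn0] at hlt
    norm_num at hlt
    linarith [abs_nonneg (t1 - t2)]
  have hNat1 : (1:ℝ) ≤ (n:ℝ) := by exact_mod_cast hn1
  have hsqn : (1:ℝ) ≤ Real.sqrt n := by
    have := Real.sqrt_le_sqrt hNat1
    rwa [Real.sqrt_one] at this
  have hπ := Real.pi_gt_three
  set h : ℝ := |t1 - t2| with hh
  have hhpos : 0 < h := hpos
  clear_value h
  have hsq : Real.sqrt (4*π^2*(n:ℝ)) = 2*π*Real.sqrt n := by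
    rw [show (4:ℝ)*π^2*(n:ℝ) = (2*π)^2 * n by ring, Real.sqrt_mul (by positivity),
      Real.sqrt_sq (by positivity)]
  have hkey : 2*π*Real.sqrt n * h < c0 := by
    rw [hsq] at hlt
    have hden : (0:ℝ) < 2*π*Real.sqrt n := by positivity
    have := (lt_div_iff₀ hden).mp hlt
    nlinarith [this]
  have h2h : 2*h ≤ 2*π*Real.sqrt n * h := by
    have e : (2:ℝ) ≤ 2*π*Real.sqrt n := by nlinarith
    nlinarith [mul_le_mul_of_nonneg_right e hhpos.le]
  have hhlt : 2*h < c0 := lt_of_le_of_lt h2h hkey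
  have hKh : K * h < 1/2 := by
    have h1 : 2*h < 1/K := lt_of_lt_of_le hhlt hc0leK
    have h2 := (lt_div_iff₀ hKpos).mp h1
    nlinarith
  -- Lipschitz bound for γ
  have hd1bound : ∀ s : ℝ, ‖deriv γ s‖ ≤ 1 := by
    intro s
    have h1 : |(deriv γ s).1| ≤ 1 := by
      rw [← Real.sqrt_one, ← Real.sqrt_sq_eq_abs]
      exact Real.sqrt_le_sqrt (by nlinarith [hunit s, sq_nonneg (deriv γ s).2])
    have h2 : |(deriv γ s).2| ≤ 1 := by
      rw [← Real.sqrt_one, ← Real.sqrt_sq_eq_abs]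
      exact Real.sqrt_le_sqrt (by nlinarith [hunit s, sq_nonneg (deriv γ s).1])
    rw [Prod.norm_def]
    simp only [Real.norm_eq_abs]
    exact max_le h1 h2
  have hγLip : ‖γ t1 - γ t2‖ ≤ h := by
    have := convex_univ.norm_image_sub_le_of_norm_deriv_le (fun x _ => hdiff x)
      (fun x _ => hd1bound x) (Set.mem_univ t2) (Set.mem_univ t1)
    rw [one_mul, Real.norm_eq_abs, ← hh] at this
    exact this
  set D1 : ℝ := (γ t1).1 - (γ t2).1 with hD1def
  set D2 : ℝ := (γ t1).2 - (γ t2).2 with hD2def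
  clear_value D1 D2
  have hD1 : |D1| ≤ h := by
    have h1 : |D1| ≤ ‖γ t1 - γ t2‖ := by
      have := norm_fst_le (γ t1 - γ t2)
      simpa [Real.norm_eq_abs, ← hD1def] using this
    exact h1.trans hγLip
  have hD2 : |D2| ≤ h := by
    have h1 : |D2| ≤ ‖γ t1 - γ t2‖ := by
      have := norm_snd_le (γ t1 - γ t2)
      simpa [Real.norm_eq_abs, ← hD2def] using this
    exact h1.trans hγLip
  have hLip' : ∀ s ∈ Set.Icc (0:ℝ) L, ∀ u ∈ Set.Icc (0:ℝ) L,
      ‖deriv γ u - deriv γ s‖ ≤ K * ‖u - s‖ :=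
    fun s hs u hu => (convex_Icc 0 L).norm_image_sub_le_of_norm_deriv_le
      (fun x _ => hdiff' x) hKb hs hu
  set v : ℝ × ℝ := deriv γ t2 with hv
  have hvunit : v.1 ^ 2 + v.2 ^ 2 = 1 := by rw [hv]; exact hunit t2
  clear_value v
  have hIsub : Set.Icc (min t1 t2) (max t1 t2) ⊆ Set.Icc (0:ℝ) L := by
    intro x hx
    exact ⟨le_trans (le_min ht1.1 ht2.1) hx.1, le_trans hx.2 (max_le ht1.2 ht2.2)⟩
  have hφd : ∀ s : ℝ, HasDerivAt (fun u => γ u - u • v) (deriv γ s - v) s := by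
    intro s
    have h1 := (hasDerivAt_id s).smul_const v
    rw [one_smul] at h1
    exact ((hdiff s).hasDerivAt).sub h1
  have hbound : ∀ x ∈ Set.Icc (min t1 t2) (max t1 t2), ‖deriv γ x - v‖ ≤ K*h := by
    intro x hx
    have h1 := hLip' t2 ht2 x (hIsub hx)
    rw [← hv] at h1
    have hmm : max t1 t2 - min t1 t2 = h := by rw [hh, abs_sub_comm]; exact max_sub_min_eq_abs t1 t2
    have h2 : ‖x - t2‖ ≤ h := by
      rw [Real.norm_eq_abs, abs_le]
      constructor
      · linarith [hx.1, le_max_right t1 t2]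
      · linarith [hx.2, min_le_right t1 t2]
    calc ‖deriv γ x - v‖ ≤ K * ‖x - t2‖ := h1
    _ ≤ K * h := by nlinarith [norm_nonneg (x - t2)]
  have hmvt : ‖(γ t1 - γ t2) - (t1 - t2) • v‖ ≤ K*h*h := by
    have H := (convex_Icc (min t1 t2) (max t1 t2)).norm_image_sub_le_of_norm_hasDerivWithin_le
      (f := fun u => γ u - u • v) (f' := fun s => deriv γ s - v)
      (fun x _ => (hφd x).hasDerivWithinAt) hbound
      ⟨min_le_right t1 t2, le_max_right t1 t2⟩ ⟨min_le_left t1 t2, le_max_left t1 t2⟩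
    have heq : (γ t1 - t1 • v) - (γ t2 - t2 • v) = (γ t1 - γ t2) - (t1 - t2) • v := by
      rw [sub_smul]; abel
    rw [heq, Real.norm_eq_abs, ← hh] at H
    linarith [H]
  have hvnorm : (1:ℝ)/2 ≤ ‖v‖ := by
    by_contra hc
    push_neg at hc
    have h1 : |v.1| ≤ ‖v‖ := by simpa [Real.norm_eq_abs] using norm_fst_le v
    have h2 : |v.2| ≤ ‖v‖ := by simpa [Real.norm_eq_abs] using norm_snd_le v
    have h3 : v.1^2 + v.2^2 = 1 := hvunit
    nlinarith [sq_abs v.1, sq_abs v.2, abs_nonneg v.1, abs_nonneg v.2]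
  have hΔpos : 0 < ‖γ t1 - γ t2‖ := by
    have hb : ‖(t1 - t2) • v‖ = h * ‖v‖ := by rw [norm_smul, Real.norm_eq_abs, ← hh]
    have htri : ‖(t1-t2) • v‖ - ‖γ t1 - γ t2‖ ≤ ‖(t1-t2) • v - (γ t1 - γ t2)‖ :=
      norm_sub_norm_le _ _
    have hrev : ‖(t1-t2) • v - (γ t1 - γ t2)‖ = ‖(γ t1 - γ t2) - (t1-t2) • v‖ :=
      norm_sub_rev _ _
    have e1 : h*(1/2) ≤ h*‖v‖ := by nlinarith
    nlinarith [hmvt]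
  have hDne : D1 ≠ 0 ∨ D2 ≠ 0 := by
    by_contra hc
    push_neg at hc
    have hz : γ t1 - γ t2 = 0 := by
      have e1 : (γ t1 - γ t2).1 = 0 := by rw [Prod.fst_sub, ← hD1def]; exact hc.1
      have e2 : (γ t1 - γ t2).2 = 0 := by rw [Prod.snd_sub, ← hD2def]; exact hc.2
      exact Prod.ext e1 e2
    rw [hz, norm_zero] at hΔpos
    exact lt_irrefl 0 hΔpos
  -- lattice point membership
  have hmem : ∀ p q : ℤ, p^2 + q^2 = (n:ℤ) → (p, q) ∈ latticePoints n := by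
    intro p q hpq
    have hp1 : p ≤ (n:ℤ) := by nlinarith [sq_nonneg (p-1), sq_nonneg q]
    have hp2 : -(n:ℤ) ≤ p := by nlinarith [sq_nonneg (p+1), sq_nonneg q]
    have hq1 : q ≤ (n:ℤ) := by nlinarith [sq_nonneg (q-1), sq_nonneg p]
    have hq2 : -(n:ℤ) ≤ q := by nlinarith [sq_nonneg (q+1), sq_nonneg p]
    rw [latticePoints, Finset.mem_filter, Finset.mem_Icc]
    exact ⟨⟨⟨hp2, hq2⟩, ⟨hp1, hq1⟩⟩, hpq⟩
  obtain ⟨A, B, hAB⟩ := hn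
  have hABmem : (A, B) ∈ latticePoints n := hmem A B hAB.symm
  have hBAmem : (-B, A) ∈ latticePoints n := hmem (-B) A (by linarith [hAB])
  have hNpos : 0 < latCard n := Finset.card_pos.mpr ⟨(A,B), hABmem⟩
  have hNR : (0:ℝ) < (latCard n : ℝ) := by exact_mod_cast hNpos
  -- coordinate bound on lattice points
  have habs : ∀ l ∈ latticePoints n, |(l.1:ℝ)| ≤ Real.sqrt n ∧ |(l.2:ℝ)| ≤ Real.sqrt n := by
    intro l hl
    have hl' : l.1^2 + l.2^2 = (n:ℤ) := (Finset.mem_filter.mp hl).2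
    have e1 : ((l.1:ℝ))^2 ≤ (n:ℝ) := by
      have : l.1^2 ≤ (n:ℤ) := by nlinarith [sq_nonneg l.2]
      exact_mod_cast this
    have e2 : ((l.2:ℝ))^2 ≤ (n:ℝ) := by
      have : l.2^2 ≤ (n:ℤ) := by nlinarith [sq_nonneg l.1]
      exact_mod_cast this
    exact ⟨Real.abs_le_sqrt e1, Real.abs_le_sqrt e2⟩
  have hargbound : ∀ l ∈ latticePoints n, |2*π*((l.1:ℝ)*D1 + (l.2:ℝ)*D2)| < 2 := by
    intro l hl
    obtain ⟨ha1, ha2⟩ := habs l hl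
    have hdot : |(l.1:ℝ)*D1 + (l.2:ℝ)*D2| ≤ Real.sqrt n * h + Real.sqrt n * h := by
      calc |(l.1:ℝ)*D1 + (l.2:ℝ)*D2| ≤ |(l.1:ℝ)*D1| + |(l.2:ℝ)*D2| := abs_add_le _ _
      _ = |(l.1:ℝ)| * |D1| + |(l.2:ℝ)| * |D2| := by rw [abs_mul, abs_mul]
      _ ≤ Real.sqrt n * h + Real.sqrt n * h :=
          add_le_add (mul_le_mul ha1 hD1 (abs_nonneg _) (Real.sqrt_nonneg _))
            (mul_le_mul ha2 hD2 (abs_nonneg _) (Real.sqrt_nonneg _))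
    rw [abs_mul, abs_of_pos (show (0:ℝ) < 2*π by positivity)]
    nlinarith [hkey, abs_nonneg ((l.1:ℝ)*D1 + (l.2:ℝ)*D2)]
  -- cosine bounds
  have hcos_gt : ∀ x : ℝ, |x| < 2 → -1 < Real.cos x := by
    intro x hx
    obtain ⟨hx1, hx2⟩ := abs_lt.mp hx
    have hmem' : x/2 ∈ Set.Ioo (-(π/2)) (π/2) := ⟨by linarith, by linarith⟩
    have hc := Real.cos_pos_of_mem_Ioo hmem'
    have hsq' := Real.cos_sq (x/2)
    rw [show 2*(x/2) = x by ring] at hsq'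
    nlinarith
  have hcos_lt : ∀ x : ℝ, x ≠ 0 → |x| < 2 → Real.cos x < 1 := by
    intro x hx0 hx
    obtain ⟨hx1, hx2⟩ := abs_lt.mp hx
    refine lt_of_le_of_ne (Real.cos_le_one x) ?_
    intro hc
    exact hx0 ((Real.cos_eq_one_iff_of_lt_of_lt (by linarith) (by linarith)).mp hc)
  -- choose a lattice point with nonzero phase
  have hdotchoice : ∃ l ∈ latticePoints n, (l.1:ℝ)*D1 + (l.2:ℝ)*D2 ≠ 0 := by
    by_contra hc
    push_neg at hc
    have h1 := hc (A,B) hABmem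
    have h2 := hc (-B, A) hBAmem
    simp only [Int.cast_neg] at h1 h2
    have hAB' : (A:ℝ)^2 + (B:ℝ)^2 = (n:ℝ) := by exact_mod_cast hAB.symm
    have hnne : (n:ℝ) ≠ 0 := by positivity
    have hD1z : D1 = 0 := by
      have e : (n:ℝ) * D1 = 0 := by linear_combination (A:ℝ)*h1 - (B:ℝ)*h2 - D1*hAB'
      exact (mul_eq_zero.mp e).resolve_left hnne
    have hD2z : D2 = 0 := by
      have e : (n:ℝ) * D2 = 0 := by linear_combination (B:ℝ)*h1 + (A:ℝ)*h2 - D2*hAB'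
      exact (mul_eq_zero.mp e).resolve_left hnne
    rcases hDne with h | h
    · exact h hD1z
    · exact h hD2z
  obtain ⟨l0, hl0mem, hl0ne⟩ := hdotchoice
  have hterm_lt : Real.cos (2*π*((l0.1:ℝ)*D1 + (l0.2:ℝ)*D2)) < 1 :=
    hcos_lt _ (mul_ne_zero (by positivity) hl0ne) (hargbound l0 hl0mem)
  set SS : ℝ := ∑ l ∈ latticePoints n, Real.cos (2*π*((l.1:ℝ)*D1 + (l.2:ℝ)*D2)) with hSS
  have hsum_lt : SS < (latCard n : ℝ) := by
    calc SS < ∑ _l ∈ latticePoints n, (1:ℝ) :=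
      Finset.sum_lt_sum (fun l _ => Real.cos_le_one _) ⟨l0, hl0mem, hterm_lt⟩
    _ = (latCard n : ℝ) := by simp [latCard]
  have hsum_gt : -(latCard n : ℝ) < SS := by
    calc -(latCard n : ℝ) = ∑ _l ∈ latticePoints n, (-1:ℝ) := by simp [latCard]
    _ < SS := Finset.sum_lt_sum_of_nonempty ⟨(A,B), hABmem⟩
        (fun l hl => hcos_gt _ (hargbound l hl))
  have hcovr : covr γ n t1 t2 = (latCard n : ℝ)⁻¹ * SS := by
    rw [hSS, hD1def, hD2def]; rfl
  constructor
  · intro hone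
    rw [hcovr] at hone
    have hS : SS = (latCard n : ℝ) := by
      field_simp at hone
      linarith
    linarith
  · intro hone
    rw [hcovr] at hone
    have hS : SS = -(latCard n : ℝ) := by
      field_simp at hone
      linarith
    linarith


end
end
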